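/- arXiv:1510.08010 — 6 statements merged into one kernel-verified Lean document; each statement's English description precedes it below -/
import Mathlib

section
/- Let A_i : H → H (i = 1,…,N) be α-inverse strongly monotone mappings whose common solution set S = {x ∈ H : A_i x = 0 for all i} is nonempty, and let μ ∈ (0, α). Define x_0 ∈ H and, for n ≥ 0: i_n an index attaining max{‖A_i x_n‖ : i = 1,…,N} and Ā_n = A_{i_n}; C_n = {v ∈ H : ⟨v, Ā_n x_n⟩ ≤ ⟨x_n - μ Ā_n x_n, Ā_n x_n⟩}; Q_n = {v ∈ H : ⟨v, x_0 - x_n⟩ ≤ ⟨x_n, x_0 - x_n⟩}; x_{n+1} = P_{C_n ∩ Q_n} x_0. Then {x_n} converges strongly to the x_0-minimal norm solution x†, i.e., the unique x† ∈ S with ‖x† - x_0‖ = min{‖z - x_0‖ : z ∈ S}. -/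
open Filter Topology
open scoped RealInnerProductSpace

/-- `p` is the metric projection of `x` onto the set `D`:
it belongs to `D` and minimizes the distance to `x` over `D`. -/
def IsMetricProj {H : Type*} [NormedAddCommGroup H] [InnerProductSpace ℝ H]
    (D : Set H) (x p : H) : Prop :=
  p ∈ D ∧ ∀ w ∈ D, ‖p - x‖ ≤ ‖w - x‖

lemma convex_inner_le' {H : Type*} [NormedAddCommGroup H] [InnerProductSpace ℝ H]
    (b : H) (r : ℝ) : Convex ℝ {v : H | ⟪v, b⟫ ≤ r} := by
  have hlin : IsLinearMap ℝ (fun v : H => ⟪v, b⟫) :=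
    ⟨fun p q => inner_add_left p q b, fun c p => by
      simp [real_inner_smul_left, smul_eq_mul]⟩
  exact convex_halfSpace_le hlin r

/-- Variational inequality for metric projections onto convex sets. -/
lemma metricProj_inner_le {H : Type*} [NormedAddCommGroup H] [InnerProductSpace ℝ H]
    {D : Set H} (hD : Convex ℝ D) {u p : H} (hp : IsMetricProj D u p)
    {v : H} (hv : v ∈ D) : ⟪v - p, u - p⟫ ≤ 0 := by
  obtain ⟨hpD, hmin⟩ := hp
  by_contra hcon
  push_neg at hcon
  set c : ℝ := ⟪v - p, u - p⟫ with hcdef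
  set d : ℝ := ‖v - p‖ ^ 2 with hddef
  have hd0 : 0 ≤ d := sq_nonneg _
  have key : ∀ t : ℝ, 0 ≤ t → t ≤ 1 → 2 * t * c ≤ t ^ 2 * d := by
    intro t ht0 ht1
    have hz : p + t • (v - p) ∈ D := by
      have h := hD hpD hv (a := 1 - t) (b := t) (by linarith) ht0 (by ring)
      have he : (1 - t) • p + t • v = p + t • (v - p) := by
        rw [smul_sub, sub_smul, one_smul]; abel
      rwa [he] at h
    have h1 : ‖p - u‖ ≤ ‖p + t • (v - p) - u‖ := hmin _ hz
    have h2 : ‖p + t • (v - p) - u‖ ^ 2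
        = ‖p - u‖ ^ 2 + 2 * (t * ⟪p - u, v - p⟫) + t ^ 2 * d := by
      have he : p + t • (v - p) - u = (p - u) + t • (v - p) := by abel
      rw [he, norm_add_sq_real, real_inner_smul_right, norm_smul, hddef]
      rw [mul_pow]
      simp [Real.norm_eq_abs, sq_abs]
    have h3 : ⟪p - u, v - p⟫ = -c := by
      have : p - u = -(u - p) := by abel
      rw [hcdef, this, inner_neg_left, real_inner_comm]
    have h1sq : ‖p - u‖ ^ 2 ≤ ‖p + t • (v - p) - u‖ ^ 2 :=
      pow_le_pow_left₀ (norm_nonneg _) h1 2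
    rw [h2, h3] at h1sq
    linarith
  rcases hd0.eq_or_lt with hd | hd
  · have := key 1 zero_le_one le_rfl
    rw [← hd] at this
    nlinarith
  · have htpos : 0 < min 1 (c / d) := lt_min one_pos (div_pos hcon hd)
    have ht := key (min 1 (c / d)) htpos.le (min_le_left _ _)
    have hcd : min 1 (c / d) * d ≤ c := by
      calc min 1 (c / d) * d ≤ (c / d) * d :=
            mul_le_mul_of_nonneg_right (min_le_right _ _) hd.le
        _ = c := div_mul_cancel₀ _ (ne_of_gt hd)
    nlinarith [mul_le_mul_of_nonneg_left hcd htpos.le, mul_pos htpos hcon]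

theorem minimum_norm_solution_convergence
    {H : Type*} [NormedAddCommGroup H] [InnerProductSpace ℝ H] [CompleteSpace H]
    (N : ℕ)
    -- the mappings `A_i : H → H` are `α`-inverse strongly monotone
    (α : ℝ) (hα : 0 < α) (A : Fin N → H → H)
    (hA : ∀ i, ∀ p q : H, α * ‖A i p - A i q‖ ^ 2 ≤ ⟪A i p - A i q, p - q⟫)
    -- the common solution set `S = {x : A_i x = 0 for all i}` is nonempty
    (S : Set H) (hS : S = {p | ∀ i, A i p = 0}) (hSne : S.Nonempty)
    -- `μ ∈ (0, α)`
    (μ : ℝ) (hμ : μ ∈ Set.Ioo 0 α)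
    -- the algorithm
    (x : ℕ → H) (inn : ℕ → Fin N) (Cn Qn : ℕ → Set H)
    -- `i_n` attains `max{‖A_i x_n‖}`, `Ā_n = A_{i_n}`
    (hin : ∀ n i, ‖A i (x n)‖ ≤ ‖A (inn n) (x n)‖)
    -- `C_n = {v : ⟨v, Ā_n x_n⟩ ≤ ⟨x_n - μ Ā_n x_n, Ā_n x_n⟩}`
    (hCn : ∀ n, Cn n =
      {v | ⟪v, A (inn n) (x n)⟫ ≤ ⟪x n - μ • A (inn n) (x n), A (inn n) (x n)⟫})
    -- `Q_n = {v : ⟨v, x_0 - x_n⟩ ≤ ⟨x_n, x_0 - x_n⟩}`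
    (hQn : ∀ n, Qn n = {v | ⟪v, x 0 - x n⟫ ≤ ⟪x n, x 0 - x n⟫})
    -- `x_{n+1} = P_{C_n ∩ Q_n} x_0`
    (hx : ∀ n, IsMetricProj (Cn n ∩ Qn n) (x 0) (x (n + 1)))
    -- `x†` is the `x_0`-minimal norm solution
    (xd : H) (hxd : xd ∈ S ∧ ∀ w ∈ S, ‖xd - x 0‖ ≤ ‖w - x 0‖) :
    Filter.Tendsto x Filter.atTop (nhds xd) := by
  have hμ0 : 0 < μ := hμ.1
  have hμα : μ < α := hμ.2
  -- S is contained in every C_n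
  have hSC : ∀ n, S ⊆ Cn n := by
    intro n p hp
    rw [hS] at hp
    have hp0 : A (inn n) p = 0 := hp (inn n)
    have h1 := hA (inn n) (x n) p
    rw [hp0, sub_zero] at h1
    rw [hCn n]
    simp only [Set.mem_setOf_eq, inner_sub_left, real_inner_smul_left,
      real_inner_self_eq_norm_sq]
    rw [inner_sub_right] at h1
    have h2 : ⟪p, A (inn n) (x n)⟫ = ⟪A (inn n) (x n), p⟫ := real_inner_comm _ _
    have h3 : ⟪x n, A (inn n) (x n)⟫ = ⟪A (inn n) (x n), x n⟫ := real_inner_comm _ _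
    nlinarith [sq_nonneg ‖A (inn n) (x n)‖]
  -- C_n ∩ Q_n is convex
  have hconv : ∀ n, Convex ℝ (Cn n ∩ Qn n) := by
    intro n
    apply Convex.inter
    · rw [hCn n]
      exact convex_inner_le' _ _
    · rw [hQn n]
      exact convex_inner_le' _ _
  -- S is contained in every Q_n
  have hSQ : ∀ n, S ⊆ Qn n := by
    intro n
    induction n with
    | zero =>
      intro p _
      rw [hQn 0]
      simp
    | succ n ih =>
      intro p hp
      have hpD : p ∈ Cn n ∩ Qn n := ⟨hSC n hp, ih hp⟩
      have hvi := metricProj_inner_le (hconv n) (hx n) hpD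
      rw [hQn (n + 1)]
      simp only [Set.mem_setOf_eq]
      rw [inner_sub_left] at hvi
      linarith
  -- basic estimate for points of Q_n
  have hQineq : ∀ n, ∀ v ∈ Qn n,
      ‖x n - x 0‖ ^ 2 + ‖v - x n‖ ^ 2 ≤ ‖v - x 0‖ ^ 2 := by
    intro n v hv
    rw [hQn n] at hv
    simp only [Set.mem_setOf_eq] at hv
    have h1 : ⟪v - x n, x 0 - x n⟫ ≤ 0 := by
      rw [inner_sub_left]; linarith
    have h2 := norm_sub_sq_real (v - x n) (x 0 - x n)
    have h4 : v - x n - (x 0 - x n) = v - x 0 := by abel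
    rw [h4] at h2
    have h5 : ‖x n - x 0‖ = ‖x 0 - x n‖ := norm_sub_rev _ _
    rw [h5]
    linarith
  -- xd belongs to every Q_n, giving boundedness
  have hxdt : ∀ n, ‖x n - x 0‖ ^ 2 + ‖xd - x n‖ ^ 2 ≤ ‖xd - x 0‖ ^ 2 :=
    fun n => hQineq n xd (hSQ n hxd.1)
  have htB : ∀ n, ‖x n - x 0‖ ^ 2 ≤ ‖xd - x 0‖ ^ 2 :=
    fun n => by nlinarith [hxdt n, sq_nonneg ‖xd - x n‖]
  -- monotonicity
  have hmono : ∀ n, ‖x n - x 0‖ ^ 2 + ‖x (n + 1) - x n‖ ^ 2 ≤ ‖x (n + 1) - x 0‖ ^ 2 :=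
    fun n => hQineq n (x (n + 1)) (hx n).1.2
  have hTmono : Monotone (fun n => ‖x n - x 0‖ ^ 2) :=
    monotone_nat_of_le_succ fun n => by nlinarith [hmono n, sq_nonneg ‖x (n + 1) - x n‖]
  have hBdd : BddAbove (Set.range fun n => ‖x n - x 0‖ ^ 2) := by
    refine ⟨‖xd - x 0‖ ^ 2, ?_⟩
    rintro _ ⟨n, rfl⟩
    exact htB n
  obtain ⟨L0, htL, hL0le⟩ : ∃ L0 : ℝ, Tendsto (fun n => ‖x n - x 0‖ ^ 2) atTop (𝓝 L0)
      ∧ L0 ≤ ‖xd - x 0‖ ^ 2 :=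
    ⟨⨆ n, ‖x n - x 0‖ ^ 2, tendsto_atTop_ciSup hTmono hBdd, ciSup_le htB⟩
  -- uniform bound on ‖x n‖
  have hxM : ∀ n, ‖x n - x 0‖ ≤ ‖xd - x 0‖ := by
    intro n
    have h := Real.sqrt_le_sqrt (htB n)
    rwa [Real.sqrt_sq (norm_nonneg _), Real.sqrt_sq (norm_nonneg _)] at h
  have hxb : ∀ n, ‖x n‖ ≤ ‖x 0‖ + ‖xd - x 0‖ := by
    intro n
    have := norm_sub_norm_le (x n) (x 0)
    have h2 := hxM n
    linarith [norm_le_insert' (x n) (x 0)]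
  -- step estimate: μ ‖a n‖ ≤ ‖x (n+1) - x n‖
  have hstep : ∀ n, μ * ‖A (inn n) (x n)‖ ≤ ‖x (n + 1) - x n‖ := by
    intro n
    have hmem : x (n + 1) ∈ Cn n := (hx n).1.1
    rw [hCn n] at hmem
    simp only [Set.mem_setOf_eq, inner_sub_left, real_inner_smul_left,
      real_inner_self_eq_norm_sq] at hmem
    have h1 : μ * ‖A (inn n) (x n)‖ ^ 2 ≤ ⟪x n - x (n + 1), A (inn n) (x n)⟫ := by
      rw [inner_sub_left]; linarith
    have h2 : ⟪x n - x (n + 1), A (inn n) (x n)⟫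
        ≤ ‖x (n + 1) - x n‖ * ‖A (inn n) (x n)‖ := by
      calc ⟪x n - x (n + 1), A (inn n) (x n)⟫
          ≤ ‖x n - x (n + 1)‖ * ‖A (inn n) (x n)‖ := real_inner_le_norm _ _
        _ = ‖x (n + 1) - x n‖ * ‖A (inn n) (x n)‖ := by rw [norm_sub_rev]
    rcases (norm_nonneg (A (inn n) (x n))).eq_or_lt with h | h
    · rw [← h, mul_zero]
      exact norm_nonneg _
    · refine le_of_mul_le_mul_right ?_ h
      nlinarith
  -- residuals tend to zero
  have hAn : ∀ (i : Fin N) n, μ ^ 2 * ‖A i (x n)‖ ^ 2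
      ≤ ‖x (n + 1) - x 0‖ ^ 2 - ‖x n - x 0‖ ^ 2 := by
    intro i n
    have hA1 : μ * ‖A i (x n)‖ ≤ ‖x (n + 1) - x n‖ :=
      le_trans (mul_le_mul_of_nonneg_left (hin n i) hμ0.le) (hstep n)
    have h4 : (μ * ‖A i (x n)‖) ^ 2 ≤ ‖x (n + 1) - x n‖ ^ 2 :=
      pow_le_pow_left₀ (by positivity) hA1 2
    nlinarith [hmono n]
  have hAlim : ∀ i : Fin N, Tendsto (fun n => A i (x n)) atTop (𝓝 0) := by
    intro i
    rw [tendsto_zero_iff_norm_tendsto_zero]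
    have h1 : Tendsto (fun n => (‖x (n + 1) - x 0‖ ^ 2 - ‖x n - x 0‖ ^ 2) / μ ^ 2)
        atTop (𝓝 0) := by
      have h2 := ((htL.comp (tendsto_add_atTop_nat 1)).sub htL).div_const (μ ^ 2)
      simpa using h2
    have hg : Tendsto (fun n => Real.sqrt ((‖x (n + 1) - x 0‖ ^ 2 - ‖x n - x 0‖ ^ 2) / μ ^ 2))
        atTop (𝓝 0) := by
      simpa using h1.sqrt
    refine squeeze_zero (fun n => norm_nonneg _) (fun n => ?_) hg
    rw [← Real.sqrt_sq (norm_nonneg (A i (x n)))]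
    apply Real.sqrt_le_sqrt
    rw [le_div_iff₀ (by positivity)]
    nlinarith [hAn i n]
  -- the ultrafilter and the weak limit
  obtain ⟨U, hU⟩ : ∃ U : Ultrafilter ℕ, (U : Filter ℕ) ≤ atTop :=
    ⟨Ultrafilter.of atTop, Ultrafilter.of_le _⟩
  have hR : ∀ (y : H) (n : ℕ), |⟪x n, y⟫| ≤ (‖x 0‖ + ‖xd - x 0‖) * ‖y‖ := by
    intro y n
    calc |⟪x n, y⟫| ≤ ‖x n‖ * ‖y‖ := abs_real_inner_le_norm _ _
      _ ≤ (‖x 0‖ + ‖xd - x 0‖) * ‖y‖ :=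
        mul_le_mul_of_nonneg_right (hxb n) (norm_nonneg y)
  have hl0 : ∀ y : H, ∃ c : ℝ, Tendsto (fun n => ⟪x n, y⟫) (U : Filter ℕ) (𝓝 c) := by
    intro y
    obtain ⟨c, -, hc⟩ :=
      (isCompact_Icc (a := -((‖x 0‖ + ‖xd - x 0‖) * ‖y‖))
        (b := (‖x 0‖ + ‖xd - x 0‖) * ‖y‖)).ultrafilter_le_nhds
        (U.map fun n => ⟪x n, y⟫) (by
          rw [Ultrafilter.coe_map, Filter.le_principal_iff]
          exact Filter.mem_map.2 (Filter.univ_mem'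
            fun n => Set.mem_Icc.2 (abs_le.1 (hR y n))))
    refine ⟨c, ?_⟩
    rw [Tendsto, ← Ultrafilter.coe_map]
    exact hc
  choose l hl using hl0
  have hadd : ∀ y z : H, l (y + z) = l y + l z := by
    intro y z
    have h := (hl y).add (hl z)
    have heq : (fun n => ⟪x n, y⟫ + ⟪x n, z⟫) = fun n => ⟪x n, y + z⟫ := by
      funext n; rw [inner_add_right]
    rw [heq] at h
    exact tendsto_nhds_unique (hl (y + z)) h
  have hsmul : ∀ (c : ℝ) (y : H), l (c • y) = c * l y := by
    intro c y
    have h := (hl y).const_mul c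
    have heq : (fun n => c * ⟪x n, y⟫) = fun n => ⟪x n, c • y⟫ := by
      funext n; exact (real_inner_smul_right (x n) y c).symm
    rw [heq] at h
    exact tendsto_nhds_unique (hl (c • y)) h
  have hbd : ∀ y : H, |l y| ≤ (‖x 0‖ + ‖xd - x 0‖) * ‖y‖ := by
    intro y
    exact le_of_tendsto (hl y).abs (Filter.Eventually.of_forall fun n => hR y n)
  obtain ⟨w, hwy⟩ : ∃ w : H, ∀ y : H, ⟪w, y⟫ = l y := by
    refine ⟨(InnerProductSpace.toDual ℝ H).symm
      (LinearMap.mkContinuous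
        { toFun := l, map_add' := hadd, map_smul' := fun c y => by simp [hsmul c y] }
        (‖x 0‖ + ‖xd - x 0‖) (fun y => by simpa [Real.norm_eq_abs] using hbd y)), ?_⟩
    intro y
    exact InnerProductSpace.toDual_symm_apply
  have hweak : ∀ y : H, Tendsto (fun n => ⟪y, x n⟫) (U : Filter ℕ) (𝓝 ⟪y, w⟫) := by
    intro y
    have h := hl y
    rw [← hwy y] at h
    have h1 : (fun n => ⟪x n, y⟫) = fun n => ⟪y, x n⟫ := by
      funext n; exact real_inner_comm _ _
    rw [h1] at h
    rwa [← real_inner_comm w y] at h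
  -- w is a common zero
  have hwS : w ∈ S := by
    rw [hS]
    intro i
    have h1 : Tendsto (fun n => A i (x n)) (U : Filter ℕ) (𝓝 0) :=
      (hAlim i).mono_left hU
    have h2 : Tendsto (fun n => ⟪A i w, x n⟫) (U : Filter ℕ) (𝓝 ⟪A i w, w⟫) :=
      hweak (A i w)
    have h3 : Tendsto (fun n => ⟪A i (x n), w - x n⟫) (U : Filter ℕ) (𝓝 0) := by
      apply squeeze_zero_norm (a := fun n => ‖A i (x n)‖ * (‖w‖ + (‖x 0‖ + ‖xd - x 0‖)))
      · intro n
        calc ‖⟪A i (x n), w - x n⟫‖ ≤ ‖A i (x n)‖ * ‖w - x n‖ := by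
              simpa [Real.norm_eq_abs] using abs_real_inner_le_norm (A i (x n)) (w - x n)
          _ ≤ ‖A i (x n)‖ * (‖w‖ + (‖x 0‖ + ‖xd - x 0‖)) := by
              apply mul_le_mul_of_nonneg_left _ (norm_nonneg _)
              calc ‖w - x n‖ ≤ ‖w‖ + ‖x n‖ := norm_sub_le _ _
                _ ≤ ‖w‖ + (‖x 0‖ + ‖xd - x 0‖) := by linarith [hxb n]
      · simpa using h1.norm.mul_const (‖w‖ + (‖x 0‖ + ‖xd - x 0‖))
    have h4 : Tendsto (fun n => α * ‖A i w - A i (x n)‖ ^ 2) (U : Filter ℕ)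
        (𝓝 (α * ‖A i w‖ ^ 2)) := by
      have h5 : Tendsto (fun n => A i w - A i (x n)) (U : Filter ℕ) (𝓝 (A i w)) := by
        simpa using tendsto_const_nhds.sub h1
      simpa using (h5.norm.pow 2).const_mul α
    have h6 : Tendsto (fun n => ⟪A i w - A i (x n), w - x n⟫) (U : Filter ℕ) (𝓝 0) := by
      have h7 := (tendsto_const_nhds (α := ℕ) (f := (U : Filter ℕ))
        (x := ⟪A i w, w⟫)).sub h2 |>.sub h3
      have h8 : (fun n => (⟪A i w, w⟫ - ⟪A i w, x n⟫) - ⟪A i (x n), w - x n⟫)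
          = fun n => ⟪A i w - A i (x n), w - x n⟫ := by
        funext n
        simp only [inner_sub_left, inner_sub_right]
        ring
      rw [h8] at h7
      simpa using h7
    have h9 : α * ‖A i w‖ ^ 2 ≤ 0 :=
      le_of_tendsto_of_tendsto' h4 h6 fun n => hA i w (x n)
    have h10 : ‖A i w‖ ^ 2 = 0 := le_antisymm (by nlinarith) (sq_nonneg _)
    have h11 : ‖A i w‖ = 0 := by
      have := pow_eq_zero_iff (n := 2) (by norm_num) |>.mp h10
      exact this
    exact norm_eq_zero.mp h11
  -- identify the limit of the norms
  have hwlb : ‖xd - x 0‖ ≤ ‖w - x 0‖ := hxd.2 w hwS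
  have hwub : ‖w - x 0‖ ^ 2 ≤ L0 := by
    have hpt : ∀ n, ⟪w - x 0, x n - x 0⟫ ≤ (‖w - x 0‖ ^ 2 + ‖x n - x 0‖ ^ 2) / 2 := by
      intro n
      have h2 := norm_sub_sq_real (w - x 0) (x n - x 0)
      nlinarith [sq_nonneg ‖w - x 0 - (x n - x 0)‖]
    have hlim1 : Tendsto (fun n => ⟪w - x 0, x n - x 0⟫) (U : Filter ℕ)
        (𝓝 (‖w - x 0‖ ^ 2)) := by
      have h1 := (hweak (w - x 0)).sub
        (tendsto_const_nhds (x := ⟪w - x 0, x 0⟫) (f := (U : Filter ℕ)))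
      have h2 : (fun n => ⟪w - x 0, x n⟫ - ⟪w - x 0, x 0⟫)
          = fun n => ⟪w - x 0, x n - x 0⟫ := by
        funext n; rw [inner_sub_right]
      rw [h2] at h1
      have h3 : ⟪w - x 0, w⟫ - ⟪w - x 0, x 0⟫ = ‖w - x 0‖ ^ 2 := by
        rw [← inner_sub_right, real_inner_self_eq_norm_sq]
      rwa [h3] at h1
    have hlim2 : Tendsto (fun n => (‖w - x 0‖ ^ 2 + ‖x n - x 0‖ ^ 2) / 2) (U : Filter ℕ)
        (𝓝 ((‖w - x 0‖ ^ 2 + L0) / 2)) :=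
      (tendsto_const_nhds.add (htL.mono_left hU)).div_const 2
    have := le_of_tendsto_of_tendsto' hlim1 hlim2 hpt
    linarith
  have hL0 : L0 = ‖xd - x 0‖ ^ 2 := by
    refine le_antisymm hL0le ?_
    have h1 : ‖xd - x 0‖ ^ 2 ≤ ‖w - x 0‖ ^ 2 := pow_le_pow_left₀ (norm_nonneg _) hwlb 2
    linarith
  -- conclude strong convergence
  have hfin : Tendsto (fun n => ‖x n - xd‖) atTop (𝓝 0) := by
    have hb : ∀ n, ‖x n - xd‖ ≤ Real.sqrt (‖xd - x 0‖ ^ 2 - ‖x n - x 0‖ ^ 2) := by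
      intro n
      rw [← Real.sqrt_sq (norm_nonneg (x n - xd))]
      apply Real.sqrt_le_sqrt
      have h1 : ‖x n - xd‖ = ‖xd - x n‖ := norm_sub_rev _ _
      rw [h1]
      nlinarith [hxdt n]
    have hg : Tendsto (fun n => Real.sqrt (‖xd - x 0‖ ^ 2 - ‖x n - x 0‖ ^ 2)) atTop
        (𝓝 0) := by
      have h1 : Tendsto (fun n => ‖xd - x 0‖ ^ 2 - ‖x n - x 0‖ ^ 2) atTop (𝓝 0) := by
        have h2 := (tendsto_const_nhds (x := ‖xd - x 0‖ ^ 2) (f := atTop (α := ℕ))).sub htL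
        rw [hL0] at h2
        simpa using h2
      simpa using h1.sqrt
    exact squeeze_zero (fun n => norm_nonneg _) hb hg
  rw [tendsto_iff_norm_sub_tendsto_zero]
  exact hfin
end

section
/- Under the stated hypotheses, with λ ∈ (0, 2α) and {α_n} ⊂ [0,1] satisfying limsup_{n→∞} α_n < 1, the sequence {x_n} generated by: x_0 ∈ H; z_n = P_C x_n; u_n^k = P_C(z_n - λ A_k z_n) (k = 1,…,M); k_n attaining max{‖u_n^k - x_n‖ : k = 1,…,M} and ū_n = u_n^{k_n}; y_n^i = α_n ū_n + (1-α_n) S_i ū_n (i = 1,…,N); i_n attaining max{‖y_n^i - x_n‖ : i = 1,…,N} and ȳ_n = y_n^{i_n}; C_n = {v ∈ H : ‖v - ȳ_n‖ ≤ ‖v - x_n‖}; Q_n = {v ∈ H : ⟨x_0 - x_n, x_n - v⟩ ≥ 0}; x_{n+1} = P_{C_n ∩ Q_n} x_0, converges strongly to P_F x_0. -/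
open Filter Topology
open scoped RealInnerProductSpace

/-!
Every point of `F` lies in every `Cₙ ∩ Qₙ`. Hence `‖xₙ - x₀‖` increases to a limit
`ρ ≤ ‖p - x₀‖`, the inequality defining `Qₙ` gives `‖xₙ₊₁ - xₙ‖ → 0`, and `xₙ₊₁ ∈ Cₙ` gives
`‖ȳₙ - xₙ‖ → 0`. Firm nonexpansiveness of `P_C` and inverse strong monotonicity of the `A_k`
turn this into `‖xₙ - zₙ‖, ‖zₙ - ūₙ‖ → 0`; then `lim sup αₙ < 1` gives `‖ūₙ - Sᵢ ūₙ‖ → 0` and the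
choice of `kₙ` gives `‖ūₙ - uₙᵏ‖ → 0`, so by demiclosedness of `I - Sᵢ` and `I - P_C (I - λ A_k)`
every weak cluster point `w` of `(xₙ)` lies in `F`. Weak lower semicontinuity of
the norm gives `‖p - x₀‖ ≤ ‖w - x₀‖ ≤ ρ ≤ ‖p - x₀‖`, and then `p ∈ Qₙ` yields
`‖xₙ - p‖² ≤ ‖p - x₀‖² - ‖xₙ - x₀‖² → 0`.

Weak cluster points are taken as weak limits along an ultrafilter finer than `atTop`.
-/

section MetricProj

variable {H : Type*} [NormedAddCommGroup H] [InnerProductSpace ℝ H] {D : Set H} {u v q s : H}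

theorem isMetricProj_self (hq : q ∈ D) : IsMetricProj D q q :=
  ⟨hq, fun _ _ => by simp⟩

theorem isMetricProj_iff_norm_eq_iInf (hq : q ∈ D) :
    IsMetricProj D u q ↔ ‖u - q‖ = ⨅ w : D, ‖u - w‖ := by
  have : Nonempty D := ⟨⟨q, hq⟩⟩
  have hbdd : BddBelow (Set.range fun w : D => ‖u - w‖) :=
    ⟨0, by rintro _ ⟨w, rfl⟩; positivity⟩
  refine ⟨fun h => le_antisymm (le_ciInf fun w => ?_) (ciInf_le hbdd ⟨q, hq⟩),
    fun h => ⟨hq, fun w hw => ?_⟩⟩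
  · rw [norm_sub_rev, norm_sub_rev u]
    exact h.2 w w.2
  · rw [norm_sub_rev, norm_sub_rev w, h]
    exact ciInf_le hbdd ⟨w, hw⟩

theorem isMetricProj_iff_inner_le (hD : Convex ℝ D) (hq : q ∈ D) :
    IsMetricProj D u q ↔ ∀ w ∈ D, ⟪u - q, w - q⟫ ≤ 0 := by
  rw [isMetricProj_iff_norm_eq_iInf hq, norm_eq_iInf_iff_real_inner_le_zero hD hq]

theorem exists_isMetricProj [CompleteSpace H] (hne : D.Nonempty) (hcl : IsClosed D)
    (hD : Convex ℝ D) (u : H) : ∃ q, IsMetricProj D u q := by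
  obtain ⟨q, hq, h⟩ := exists_norm_eq_iInf_of_complete_convex hne hcl.isComplete hD u
  exact ⟨q, (isMetricProj_iff_norm_eq_iInf hq).mpr h⟩

theorem IsMetricProj.norm_sub_sq_le_inner (hD : Convex ℝ D) (hq : IsMetricProj D u q)
    (hs : IsMetricProj D v s) : ‖q - s‖ ^ 2 ≤ ⟪u - v, q - s⟫ := by
  have h₁ := (isMetricProj_iff_inner_le hD hq.1).mp hq s hs.1
  have h₂ := (isMetricProj_iff_inner_le hD hs.1).mp hs q hq.1
  have : ⟪u - q, s - q⟫ + ⟪v - s, q - s⟫ = ‖q - s‖ ^ 2 - ⟪u - v, q - s⟫ := by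
    rw [← neg_sub q s, inner_neg_right, neg_add_eq_sub, ← inner_sub_left,
      ← real_inner_self_eq_norm_sq, ← inner_sub_left]
    congr 1
    abel
  linarith

theorem IsMetricProj.norm_sub_sq_add_le (hD : Convex ℝ D) (hq : IsMetricProj D u q)
    (hs : IsMetricProj D v s) : ‖q - s‖ ^ 2 + ‖(u - v) - (q - s)‖ ^ 2 ≤ ‖u - v‖ ^ 2 := by
  rw [norm_sub_sq_real (u - v)]
  linarith [hq.norm_sub_sq_le_inner hD hs]

theorem IsMetricProj.norm_sub_le (hD : Convex ℝ D) (hq : IsMetricProj D u q)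
    (hs : IsMetricProj D v s) : ‖q - s‖ ≤ ‖u - v‖ :=
  (sq_le_sq₀ (norm_nonneg _) (norm_nonneg _)).mp
    (by nlinarith [hq.norm_sub_sq_add_le hD hs, sq_nonneg ‖(u - v) - (q - s)‖])

theorem isMetricProj_sub_smul_self_iff (hD : Convex ℝ D) (hq : q ∈ D) {lam : ℝ} (hlam : 0 < lam)
    (g : H) : IsMetricProj D (q - lam • g) q ↔ ∀ w ∈ D, 0 ≤ ⟪g, w - q⟫ := by
  rw [isMetricProj_iff_inner_le hD hq]
  refine forall₂_congr fun w _ => ?_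
  rw [sub_sub_cancel_left, inner_neg_left, real_inner_smul_left, neg_nonpos,
    mul_nonneg_iff_of_pos_left hlam]

end MetricProj

section InverseStronglyMonotone

variable {H : Type*} [NormedAddCommGroup H] [InnerProductSpace ℝ H]

def IsInverseStronglyMonotoneOn (α : ℝ) (A : H → H) (C : Set H) : Prop :=
  ∀ p ∈ C, ∀ q ∈ C, α * ‖A p - A q‖ ^ 2 ≤ ⟪A p - A q, p - q⟫

theorem norm_sub_smul_sq_le {d e : H} {α lam : ℝ} (hlam : 0 ≤ lam) (h : α * ‖e‖ ^ 2 ≤ ⟪e, d⟫) :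
    ‖d - lam • e‖ ^ 2 ≤ ‖d‖ ^ 2 - lam * (2 * α - lam) * ‖e‖ ^ 2 := by
  rw [norm_sub_sq_real, real_inner_smul_right, norm_smul, real_inner_comm, mul_pow,
    Real.norm_eq_abs, sq_abs]
  nlinarith [mul_le_mul_of_nonneg_left h hlam]

variable {D : Set H} {α lam : ℝ} {v v' g g' q s : H}

theorem IsMetricProj.norm_sub_le_of_inverseStronglyMonotone (hD : Convex ℝ D)
    (hq : IsMetricProj D (v - lam • g) q) (hs : IsMetricProj D (v' - lam • g') s)
    (hg : α * ‖g - g'‖ ^ 2 ≤ ⟪g - g', v - v'⟫) (hlam : lam ∈ Set.Icc 0 (2 * α)) :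
    ‖q - s‖ ≤ ‖v - v'‖ := by
  have hforward : ‖(v - lam • g) - (v' - lam • g')‖ ^ 2 ≤ ‖v - v'‖ ^ 2 := by
    rw [show (v - lam • g) - (v' - lam • g') = (v - v') - lam • (g - g') by
      rw [smul_sub]; abel]
    have := norm_sub_smul_sq_le hlam.1 hg
    nlinarith [mul_nonneg (mul_nonneg hlam.1 (sub_nonneg.mpr hlam.2)) (sq_nonneg ‖g - g'‖)]
  exact (hq.norm_sub_le hD hs).trans
    ((sq_le_sq₀ (norm_nonneg _) (norm_nonneg _)).mp hforward)

theorem IsMetricProj.sq_norm_sub_le_of_inverseStronglyMonotone (hD : Convex ℝ D)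
    (hq : IsMetricProj D (v - lam • g) q) (hs : IsMetricProj D (s - lam • g') s)
    (hg : α * ‖g - g'‖ ^ 2 ≤ ⟪g - g', v - s⟫) (hlam : lam ∈ Set.Ioo 0 (2 * α)) :
    (2 * α - lam) * ‖v - q‖ ^ 2 ≤ 4 * α * (‖v - s‖ ^ 2 - ‖q - s‖ ^ 2) := by
  obtain ⟨hlam0, hlam2⟩ := hlam
  set e := g - g'
  set G := (v - q) - lam • e
  have hfirm := hq.norm_sub_sq_add_le hD hs
  rw [show (v - lam • g) - (s - lam • g') - (q - s) = G by simp only [G, e, smul_sub]; abel,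
    show (v - lam • g) - (s - lam • g') = (v - s) - lam • e by simp only [e, smul_sub]; abel]
    at hfirm
  have hism := norm_sub_smul_sq_le hlam0.le hg
  have hvq : ‖v - q‖ ≤ ‖G‖ + lam * ‖e‖ := by
    calc ‖v - q‖ = ‖G + lam • e‖ := by simp only [G, sub_add_cancel]
      _ ≤ ‖G‖ + ‖lam • e‖ := norm_add_le _ _
      _ = ‖G‖ + lam * ‖e‖ := by rw [norm_smul, Real.norm_of_nonneg hlam0.le]
  have hsq : ‖v - q‖ ^ 2 ≤ 2 * ‖G‖ ^ 2 + 2 * lam ^ 2 * ‖e‖ ^ 2 := by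
    nlinarith [sq_nonneg (‖G‖ - lam * ‖e‖), norm_nonneg (v - q)]
  have hκ : 0 ≤ lam * (2 * α - lam) * ‖e‖ ^ 2 := by positivity
  nlinarith [mul_le_mul_of_nonneg_left hsq (by linarith : (0 : ℝ) ≤ 2 * α - lam)]

end InverseStronglyMonotone

section WeakLimit

variable {H : Type*} [NormedAddCommGroup H] [InnerProductSpace ℝ H] {ι : Type*} {l : Filter ι}
  {u u' : ι → H} {w : H}

/-- Banach–Alaoglu, transported to `H` by the Riesz representation. -/
theorem exists_tendsto_inner_of_norm_le [CompleteSpace H] (U : Ultrafilter ι) {B : ℝ}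
    (hB : ∀ i, ‖u i‖ ≤ B) : ∃ w : H, ∀ v, Tendsto (fun i => ⟪u i, v⟫) U (𝓝 ⟪w, v⟫) := by
  let φ : ι → WeakDual ℝ H := fun i => StrongDual.toWeakDual (innerSL ℝ (u i))
  have hK := WeakDual.isCompact_closedBall (𝕜 := ℝ) (E := H) 0 B
  obtain ⟨ψ, -, hψ⟩ := hK.ultrafilter_le_nhds (U.map φ) (by
    rw [Ultrafilter.coe_map, le_principal_iff, mem_map]
    exact univ_mem' fun i => by simpa [φ] using hB i)
  refine ⟨(InnerProductSpace.toDual ℝ H).symm (WeakDual.toStrongDual ψ), fun v => ?_⟩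
  rw [InnerProductSpace.toDual_symm_apply]
  exact (tendsto_iff_forall_eval_tendsto_topDualPairing.mp hψ) v

theorem tendsto_inner_sub_of_tendsto_inner
    (hw : ∀ v, Tendsto (fun i => ⟪u i, v⟫) l (𝓝 ⟪w, v⟫)) (v c : H) :
    Tendsto (fun i => ⟪v, u i - c⟫) l (𝓝 ⟪v, w - c⟫) := by
  have h := (hw v).sub_const ⟪c, v⟫
  simp only [← inner_sub_left] at h
  simpa only [real_inner_comm v] using h

theorem tendsto_inner_of_tendsto_norm_sub
    (hw : ∀ v, Tendsto (fun i => ⟪u' i, v⟫) l (𝓝 ⟪w, v⟫))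
    (h : Tendsto (fun i => ‖u i - u' i‖) l (𝓝 0)) (v : H) :
    Tendsto (fun i => ⟪u i, v⟫) l (𝓝 ⟪w, v⟫) := by
  have hdiff : Tendsto (fun i => ⟪u i - u' i, v⟫) l (𝓝 0) := by
    refine squeeze_zero_norm (fun i => norm_inner_le_norm _ _) ?_
    simpa using h.mul_const ‖v‖
  simpa [inner_sub_left] using (hw v).add hdiff

variable [l.NeBot]

theorem mem_of_tendsto_inner [CompleteSpace H] {D : Set H} (hcl : IsClosed D) (hD : Convex ℝ D)
    (hu : ∀ᶠ i in l, u i ∈ D) (hw : ∀ v, Tendsto (fun i => ⟪u i, v⟫) l (𝓝 ⟪w, v⟫)) : w ∈ D := by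
  obtain ⟨q, hq⟩ := exists_isMetricProj (hu.exists.elim fun i hi => ⟨u i, hi⟩) hcl hD w
  have hle : ⟪w - q, w - q⟫ ≤ 0 :=
    le_of_tendsto (tendsto_inner_sub_of_tendsto_inner hw _ _)
      (hu.mono fun i hi => (isMetricProj_iff_inner_le hD hq.1).mp hq _ hi)
  rw [real_inner_self_nonpos, sub_eq_zero] at hle
  exact hle ▸ hq.1

theorem norm_sub_le_of_tendsto_inner (hw : ∀ v, Tendsto (fun i => ⟪u i, v⟫) l (𝓝 ⟪w, v⟫))
    {c : H} {r : ℝ} (hr : Tendsto (fun i => ‖u i - c‖) l (𝓝 r)) : ‖w - c‖ ≤ r := by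
  have hr0 : 0 ≤ r := ge_of_tendsto' hr fun _ => norm_nonneg _
  have hsq : ‖w - c‖ ^ 2 ≤ ‖w - c‖ * r := by
    rw [← real_inner_self_eq_norm_sq]
    exact le_of_tendsto_of_tendsto (tendsto_inner_sub_of_tendsto_inner hw _ _)
      (hr.const_mul _) (Eventually.of_forall fun i => real_inner_le_norm _ _)
  nlinarith [norm_nonneg (w - c)]

/-- A form of the demiclosedness principle. -/
theorem eq_of_tendsto_inner_of_norm_sub_le (hw : ∀ v, Tendsto (fun i => ⟪u i, v⟫) l (𝓝 ⟪w, v⟫))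
    {B : ℝ} (hB : ∀ᶠ i in l, ‖u i - w‖ ≤ B) {ε : ι → ℝ} (hε : Tendsto ε l (𝓝 0)) {q : H}
    (h : ∀ᶠ i in l, ‖u i - q‖ ≤ ‖u i - w‖ + ε i) : q = w := by
  have hδ : Tendsto (fun i => |ε i| * (2 * B + |ε i|)) l (𝓝 0) := by
    have habs : Tendsto (fun i => |ε i|) l (𝓝 0) := by simpa using hε.abs
    simpa using habs.mul (habs.const_add (2 * B))
  have hlim : Tendsto (fun i => ‖w - q‖ ^ 2 + 2 * ⟪w - q, u i - w⟫) l (𝓝 (‖w - q‖ ^ 2)) := by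
    simpa using (tendsto_inner_sub_of_tendsto_inner hw (w - q) w).const_mul 2 |>.const_add _
  have hle : ‖w - q‖ ^ 2 ≤ 0 := by
    refine le_of_tendsto_of_tendsto hlim hδ ?_
    filter_upwards [hB, h] with i hBi hi
    have hexp : ‖u i - q‖ ^ 2 = ‖u i - w‖ ^ 2 + 2 * ⟪w - q, u i - w⟫ + ‖w - q‖ ^ 2 := by
      rw [← sub_add_sub_cancel (u i) w q, norm_add_sq_real, real_inner_comm]
    have hεi := le_abs_self (ε i)
    nlinarith [norm_nonneg (u i - q), norm_nonneg (u i - w), abs_nonneg (ε i)]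
  simpa [sub_eq_zero, eq_comm] using hle

end WeakLimit

theorem tendsto_nhds_zero_of_sq_le {ι : Type*} {l : Filter ι} {f g : ι → ℝ} (hf : ∀ i, 0 ≤ f i)
    (hfg : ∀ i, f i ^ 2 ≤ g i) (hg : Tendsto g l (𝓝 0)) : Tendsto f l (𝓝 0) :=
  squeeze_zero hf (fun i => Real.le_sqrt_of_sq_le (hfg i)) (by simpa using hg.sqrt)

theorem tendsto_nhds_zero_of_one_sub_mul {a c : ℕ → ℝ} (ha : ∀ n, a n ≤ 1)
    (ha' : limsup a atTop < 1) (hc : ∀ n, 0 ≤ c n)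
    (h : Tendsto (fun n => (1 - a n) * c n) atTop (𝓝 0)) : Tendsto c atTop (𝓝 0) := by
  obtain ⟨b, hab, hb⟩ := exists_between ha'
  have hlt : ∀ᶠ n in atTop, a n < b :=
    eventually_lt_of_limsup_lt hab (isBoundedUnder_of ⟨1, ha⟩)
  refine squeeze_zero' (Eventually.of_forall hc) ?_ (by simpa using h.const_mul (1 - b)⁻¹)
  filter_upwards [hlt] with n hn
  rw [inv_mul_eq_div, le_div_iff₀ (sub_pos.mpr hb)]
  nlinarith [hc n]

theorem tendsto_norm_sub_of_succ_mem {E : Type*} [SeminormedAddCommGroup E] {x y : ℕ → E}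
    (hy : ∀ n, ‖x (n + 1) - y n‖ ≤ ‖x (n + 1) - x n‖)
    (hx : Tendsto (fun n => ‖x (n + 1) - x n‖) atTop (𝓝 0)) :
    Tendsto (fun n => ‖y n - x n‖) atTop (𝓝 0) := by
  refine squeeze_zero (fun _ => norm_nonneg _) (fun n => ?_) (by simpa using hx.const_mul 2)
  linarith [norm_sub_le_norm_sub_add_norm_sub (y n) (x (n + 1)) (x n),
    norm_sub_rev (y n) (x (n + 1)), hy n]

theorem norm_smul_add_one_sub_smul_sub_le {E : Type*} [SeminormedAddCommGroup E]
    [NormedSpace ℝ E] {a : ℝ} (ha : a ∈ Set.Icc (0 : ℝ) 1) {u v p : E} (h : ‖v - p‖ ≤ ‖u - p‖) :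
    ‖a • u + (1 - a) • v - p‖ ≤ ‖u - p‖ := by
  have hu : u ∈ Metric.closedBall p ‖u - p‖ := by rw [Metric.mem_closedBall, dist_eq_norm]
  have hv : v ∈ Metric.closedBall p ‖u - p‖ := by rwa [Metric.mem_closedBall, dist_eq_norm]
  have hmem := convex_closedBall p ‖u - p‖ hu hv ha.1 (sub_nonneg.mpr ha.2) (add_sub_cancel a 1)
  rwa [Metric.mem_closedBall, dist_eq_norm] at hmem

section HalfSpace

variable {H : Type*} [NormedAddCommGroup H] [InnerProductSpace ℝ H]

theorem convex_setOf_inner_sub_nonneg (c y : H) : Convex ℝ {v : H | 0 ≤ ⟪c, y - v⟫} := by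
  simp_rw [inner_sub_right, sub_nonneg]
  exact convex_halfSpace_le (innerₛₗ ℝ c).isLinear _

theorem convex_setOf_norm_sub_le_norm_sub (x y : H) :
    Convex ℝ {v : H | ‖v - y‖ ≤ ‖v - x‖} := by
  have hset : {v : H | ‖v - y‖ ≤ ‖v - x‖} = {v | ⟪x - y, v⟫ ≤ (‖x‖ ^ 2 - ‖y‖ ^ 2) / 2} := by
    ext v
    change ‖v - y‖ ≤ ‖v - x‖ ↔ ⟪x - y, v⟫ ≤ (‖x‖ ^ 2 - ‖y‖ ^ 2) / 2
    rw [← sq_le_sq₀ (norm_nonneg _) (norm_nonneg _),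
      norm_sub_sq_real, norm_sub_sq_real, inner_sub_left, real_inner_comm x,
      real_inner_comm y]
    constructor <;> intro h <;> linarith
  rw [hset]
  exact convex_halfSpace_le (innerₛₗ ℝ (x - y)).isLinear _

theorem sq_norm_sub_add_sq_norm_sub_le {x₀ y v : H} (h : 0 ≤ ⟪x₀ - y, y - v⟫) :
    ‖v - y‖ ^ 2 + ‖y - x₀‖ ^ 2 ≤ ‖v - x₀‖ ^ 2 := by
  rw [← sub_add_sub_cancel v y x₀, norm_add_sq_real (v - y), ← neg_sub y v, ← neg_sub x₀ y,
    inner_neg_neg, real_inner_comm]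
  linarith

end HalfSpace

namespace Hybrid

variable {H : Type*} [NormedAddCommGroup H] [InnerProductSpace ℝ H] {x : ℕ → H} {D : ℕ → Set H} {p : H}

theorem monotone_norm_sub
    (hx : ∀ n, IsMetricProj (D n ∩ {v | 0 ≤ ⟪x 0 - x n, x n - v⟫}) (x 0) (x (n + 1))) :
    Monotone fun n => ‖x n - x 0‖ := by
  refine monotone_nat_of_le_succ fun n => (sq_le_sq₀ (norm_nonneg _) (norm_nonneg _)).mp ?_
  nlinarith [sq_norm_sub_add_sq_norm_sub_le (hx n).1.2, sq_nonneg ‖x (n + 1) - x n‖]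

variable (hD : ∀ n, Convex ℝ (D n))
  (hx : ∀ n, IsMetricProj (D n ∩ {v | 0 ≤ ⟪x 0 - x n, x n - v⟫}) (x 0) (x (n + 1)))
  (hp : ∀ n, p ∈ D n)
include hD hx hp

theorem inner_nonneg (n : ℕ) : 0 ≤ ⟪x 0 - x n, x n - p⟫ := by
  induction n with
  | zero => simp
  | succ n ih =>
    have hconv := (hD n).inter (convex_setOf_inner_sub_nonneg (x 0 - x n) (x n))
    have h := (isMetricProj_iff_inner_le hconv (hx n).1).mp (hx n) p ⟨hp n, ih⟩
    rw [← neg_sub (x (n + 1)) p, inner_neg_right] at h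
    linarith

theorem norm_sub_le (n : ℕ) : ‖x n - x 0‖ ≤ ‖p - x 0‖ := by
  cases n with
  | zero => simp
  | succ n => exact (hx n).2 p ⟨hp n, inner_nonneg hD hx hp n⟩

theorem exists_tendsto_norm_sub :
    ∃ r ≤ ‖p - x 0‖, Tendsto (fun n => ‖x n - x 0‖) atTop (𝓝 r) := by
  have hbdd : BddAbove (Set.range fun n => ‖x n - x 0‖) :=
    ⟨_, Set.forall_mem_range.mpr (norm_sub_le hD hx hp)⟩
  exact ⟨_, ciSup_le (norm_sub_le hD hx hp), tendsto_atTop_ciSup (monotone_norm_sub hx) hbdd⟩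

theorem tendsto_norm_succ_sub : Tendsto (fun n => ‖x (n + 1) - x n‖) atTop (𝓝 0) := by
  obtain ⟨r, -, hr⟩ := exists_tendsto_norm_sub hD hx hp
  have hsucc := hr.comp (tendsto_add_atTop_nat 1)
  refine tendsto_nhds_zero_of_sq_le (fun _ => norm_nonneg _)
    (fun n => ?_) (by simpa using (hsucc.pow 2).sub (hr.pow 2))
  linarith [sq_norm_sub_add_sq_norm_sub_le (hx n).1.2]

theorem tendsto_of_tendsto_inner {l : Filter ℕ} [l.NeBot] (hl : l ≤ atTop) {w : H}
    (hw : ∀ v, Tendsto (fun n => ⟪x n, v⟫) l (𝓝 ⟪w, v⟫))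
    (hpw : ‖p - x 0‖ ≤ ‖w - x 0‖) : Tendsto x atTop (𝓝 p) := by
  obtain ⟨r, hrp, hr⟩ := exists_tendsto_norm_sub hD hx hp
  have hwr : ‖w - x 0‖ ≤ r := norm_sub_le_of_tendsto_inner hw (hr.mono_left hl)
  have hsq : ∀ m, ‖x m - p‖ ^ 2 ≤ ‖p - x 0‖ ^ 2 - ‖x m - x 0‖ ^ 2 := fun m => by
    rw [norm_sub_rev]
    linarith [sq_norm_sub_add_sq_norm_sub_le (inner_nonneg hD hx hp m)]
  rw [tendsto_iff_norm_sub_tendsto_zero]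
  refine tendsto_nhds_zero_of_sq_le (fun _ => norm_nonneg _) hsq ?_
  convert (hr.pow 2).const_sub (‖p - x 0‖ ^ 2) using 2
  rw [le_antisymm hrp (hpw.trans hwr), sub_self]

end Hybrid

section ParallelHybrid

variable {H : Type*} [NormedAddCommGroup H] [InnerProductSpace ℝ H]
  {M N : ℕ} {C : Set H} {A : Fin M → H → H} {S : Fin N → H → H} {α lam : ℝ}

def IsCommonSolution (C : Set H) (A : Fin M → H → H) (S : Fin N → H → H) (p : H) : Prop :=
  p ∈ C ∧ (∀ i, S i p = p) ∧ ∀ k, ∀ q ∈ C, 0 ≤ ⟪A k p, q - p⟫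

theorem IsCommonSolution.isMetricProj (hC : Convex ℝ C) (hlam : 0 < lam)
    (hp : IsCommonSolution C A S p) (k : Fin M) :
    IsMetricProj C (p - lam • A k p) p :=
  (isMetricProj_sub_smul_self_iff hC hp.1 hlam _).mpr (hp.2.2 k)

/-- One iteration of the method from `x = xₙ`; `u k` and `y i` are `ūₙ` and `ȳₙ`. -/
structure IsParallelStep (C : Set H) (A : Fin M → H → H) (S : Fin N → H → H) (lam a : ℝ)
    (x z : H) (u : Fin M → H) (k : Fin M) (y : Fin N → H) (i : Fin N) : Prop where
  proj_z : IsMetricProj C x z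
  proj_u : ∀ k', IsMetricProj C (z - lam • A k' z) (u k')
  max_u : ∀ k', ‖u k' - x‖ ≤ ‖u k - x‖
  y_eq : ∀ i', y i' = a • u k + (1 - a) • S i' (u k)
  max_y : ∀ i', ‖y i' - x‖ ≤ ‖y i - x‖

namespace IsParallelStep

variable {a : ℝ} {x z p : H} {u : Fin M → H} {k : Fin M} {y : Fin N → H} {i : Fin N}

theorem norm_u_sub_le (hs : IsParallelStep C A S lam a x z u k y i) (k' : Fin M) :
    ‖u k - u k'‖ ≤ 2 * ‖x - u k‖ := by
  linarith [norm_sub_le_norm_sub_add_norm_sub (u k) x (u k'), hs.max_u k',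
    norm_sub_rev (u k) x, norm_sub_rev (u k') x]

theorem one_sub_mul_norm_sub_le (hs : IsParallelStep C A S lam a x z u k y i) (ha : a ≤ 1)
    (j : Fin N) : (1 - a) * ‖u k - S j (u k)‖ ≤ ‖y i - x‖ + ‖x - u k‖ := by
  have hyu : y j - u k = (1 - a) • (S j (u k) - u k) := by
    rw [hs.y_eq]
    module
  have h := norm_sub_le_norm_sub_add_norm_sub (y j) x (u k)
  rw [hyu, norm_smul, Real.norm_of_nonneg (sub_nonneg.mpr ha), norm_sub_rev] at h
  linarith [hs.max_y j]

theorem norm_sub_le_chain (hC : Convex ℝ C) (hA : ∀ k, IsInverseStronglyMonotoneOn α (A k) C)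
    (hS : ∀ i, ∀ p ∈ C, ∀ q ∈ C, ‖S i p - S i q‖ ≤ ‖p - q‖) (hlam : lam ∈ Set.Ioo 0 (2 * α))
    (hs : IsParallelStep C A S lam a x z u k y i)
    (ha : a ∈ Set.Icc (0 : ℝ) 1) (hp : IsCommonSolution C A S p) :
    ‖y i - p‖ ≤ ‖u k - p‖ ∧ ‖u k - p‖ ≤ ‖z - p‖ ∧ ‖z - p‖ ≤ ‖x - p‖ := by
  refine ⟨?_, ?_, hs.proj_z.norm_sub_le hC (isMetricProj_self hp.1)⟩
  · rw [hs.y_eq]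
    refine norm_smul_add_one_sub_smul_sub_le ha ?_
    simpa only [hp.2.1 i] using hS i _ (hs.proj_u k).1 p hp.1
  · exact (hs.proj_u k).norm_sub_le_of_inverseStronglyMonotone hC
      (hp.isMetricProj hC hlam.1 k) (hA k _ hs.proj_z.1 p hp.1)
      (Set.Ioo_subset_Icc_self hlam)

theorem sq_norm_sub_le (hC : Convex ℝ C) (hA : ∀ k, IsInverseStronglyMonotoneOn α (A k) C)
    (hS : ∀ i, ∀ p ∈ C, ∀ q ∈ C, ‖S i p - S i q‖ ≤ ‖p - q‖) (hlam : lam ∈ Set.Ioo 0 (2 * α))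
    (hs : IsParallelStep C A S lam a x z u k y i)
    (ha : a ∈ Set.Icc (0 : ℝ) 1) (hp : IsCommonSolution C A S p) :
    ‖x - z‖ ^ 2 ≤ 2 * (‖x - p‖ * ‖y i - x‖) ∧
      (2 * α - lam) * ‖z - u k‖ ^ 2 ≤ 8 * α * (‖x - p‖ * ‖y i - x‖) := by
  obtain ⟨hyu, huz, hzx⟩ := norm_sub_le_chain hC hA hS hlam hs ha hp
  have hxz := hs.proj_z.norm_sub_sq_add_le hC (isMetricProj_self hp.1)
  rw [sub_sub_sub_cancel_right] at hxz
  have hzu := (hs.proj_u k).sq_norm_sub_le_of_inverseStronglyMonotone hC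
    (hp.isMetricProj hC hlam.1 k) (hA k _ hs.proj_z.1 p hp.1) hlam
  have hdrop : ‖x - p‖ ^ 2 - ‖y i - p‖ ^ 2 ≤ 2 * (‖x - p‖ * ‖y i - x‖) := by
    nlinarith [norm_sub_le_norm_sub_add_norm_sub x (y i) p, norm_sub_rev x (y i),
      norm_nonneg (y i - p)]
  have hyu2 := pow_le_pow_left₀ (norm_nonneg _) hyu 2
  have huz2 := pow_le_pow_left₀ (norm_nonneg _) huz 2
  have hzx2 := pow_le_pow_left₀ (norm_nonneg _) hzx 2
  have hD : ‖z - p‖ ^ 2 - ‖u k - p‖ ^ 2 ≤ 2 * (‖x - p‖ * ‖y i - x‖) := by linarith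
  have hα : 0 ≤ 4 * α := by linarith [hlam.1, hlam.2]
  exact ⟨by linarith, by linarith [mul_le_mul_of_nonneg_left hD hα]⟩

end IsParallelStep

variable {a : ℕ → ℝ} {x z : ℕ → H} {u : ℕ → Fin M → H} {k : ℕ → Fin M} {y : ℕ → Fin N → H}
  {i : ℕ → Fin N} {p : H} {B : ℝ}

theorem tendsto_norm_sub_ubar (hC : Convex ℝ C) (hA : ∀ k, IsInverseStronglyMonotoneOn α (A k) C)
    (hS : ∀ i, ∀ p ∈ C, ∀ q ∈ C, ‖S i p - S i q‖ ≤ ‖p - q‖) (hlam : lam ∈ Set.Ioo 0 (2 * α))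
    (hs : ∀ n, IsParallelStep C A S lam (a n) (x n) (z n) (u n) (k n) (y n) (i n))
    (ha : ∀ n, a n ∈ Set.Icc (0 : ℝ) 1) (hp : IsCommonSolution C A S p)
    (hB : ∀ n, ‖x n - p‖ ≤ B) (hreg : Tendsto (fun n => ‖y n (i n) - x n‖) atTop (𝓝 0)) :
    Tendsto (fun n => ‖x n - u n (k n)‖) atTop (𝓝 0) ∧
      Tendsto (fun n => ‖z n - u n (k n)‖) atTop (𝓝 0) := by
  have hprod : Tendsto (fun n => ‖x n - p‖ * ‖y n (i n) - x n‖) atTop (𝓝 0) :=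
    squeeze_zero (fun _ => by positivity)
      (fun n => mul_le_mul_of_nonneg_right (hB n) (norm_nonneg _))
      (by simpa using hreg.const_mul B)
  have hxz : Tendsto (fun n => ‖x n - z n‖) atTop (𝓝 0) :=
    tendsto_nhds_zero_of_sq_le (fun _ => norm_nonneg _)
      (fun n => ((hs n).sq_norm_sub_le hC hA hS hlam (ha n) hp).1)
      (by simpa using hprod.const_mul 2)
  have hzu : Tendsto (fun n => ‖z n - u n (k n)‖) atTop (𝓝 0) := by
    refine tendsto_nhds_zero_of_sq_le (fun _ => norm_nonneg _) (fun n => ?_)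
      (by simpa using hprod.const_mul (8 * α / (2 * α - lam)))
    rw [div_mul_eq_mul_div, le_div_iff₀ (by linarith [hlam.2])]
    linarith [((hs n).sq_norm_sub_le hC hA hS hlam (ha n) hp).2]
  refine ⟨squeeze_zero (fun _ => norm_nonneg _) (fun n => ?_) (by simpa using hxz.add hzu), hzu⟩
  exact norm_sub_le_norm_sub_add_norm_sub _ _ _

theorem isCommonSolution_of_tendsto_inner [CompleteSpace H] (hCcl : IsClosed C)
    (hC : Convex ℝ C) (hA : ∀ k, IsInverseStronglyMonotoneOn α (A k) C)
    (hS : ∀ i, ∀ p ∈ C, ∀ q ∈ C, ‖S i p - S i q‖ ≤ ‖p - q‖) (hlam : lam ∈ Set.Ioo 0 (2 * α))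
    (hs : ∀ n, IsParallelStep C A S lam (a n) (x n) (z n) (u n) (k n) (y n) (i n))
    (ha : ∀ n, a n ∈ Set.Icc (0 : ℝ) 1) (ha' : limsup a atTop < 1)
    (hp : IsCommonSolution C A S p) (hB : ∀ n, ‖x n - p‖ ≤ B)
    (hreg : Tendsto (fun n => ‖y n (i n) - x n‖) atTop (𝓝 0)) {l : Filter ℕ} [l.NeBot]
    (hl : l ≤ atTop) {w : H} (hw : ∀ v, Tendsto (fun n => ⟪x n, v⟫) l (𝓝 ⟪w, v⟫)) :
    IsCommonSolution C A S w := by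
  obtain ⟨hxu, hzu⟩ := tendsto_norm_sub_ubar hC hA hS hlam hs ha hp hB hreg
  have hubC : ∀ n, u n (k n) ∈ C := fun n => ((hs n).proj_u _).1
  have hwu := tendsto_inner_of_tendsto_norm_sub hw
    (by simpa only [norm_sub_rev] using hxu.mono_left hl)
  have hwC : w ∈ C := mem_of_tendsto_inner hCcl hC (.of_forall hubC) hwu
  have hbdd : ∀ᶠ n in l, ‖u n (k n) - w‖ ≤ B + ‖p - w‖ := .of_forall fun n => by
    obtain ⟨-, huz, hzx⟩ := (hs n).norm_sub_le_chain hC hA hS hlam (ha n) hp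
    linarith [norm_sub_le_norm_sub_add_norm_sub (u n (k n)) p w, hB n]
  refine ⟨hwC, fun j => ?_, fun j => ?_⟩
  · have hSu : Tendsto (fun n => ‖u n (k n) - S j (u n (k n))‖) atTop (𝓝 0) :=
      tendsto_nhds_zero_of_one_sub_mul (fun n => (ha n).2) ha' (fun _ => norm_nonneg _)
        (squeeze_zero (fun n => mul_nonneg (sub_nonneg.2 (ha n).2) (norm_nonneg _))
          (fun n => (hs n).one_sub_mul_norm_sub_le (ha n).2 j) (by simpa using hreg.add hxu))
    refine eq_of_tendsto_inner_of_norm_sub_le hwu hbdd (hSu.mono_left hl) (.of_forall fun n => ?_)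
    linarith [norm_sub_le_norm_sub_add_norm_sub (u n (k n)) (S j (u n (k n))) (S j w),
      hS j _ (hubC n) w hwC]
  · obtain ⟨q, hq⟩ := exists_isMetricProj ⟨w, hwC⟩ hCcl hC (w - lam • A j w)
    have hε : Tendsto (fun n => 2 * ‖x n - u n (k n)‖ + ‖z n - u n (k n)‖) atTop (𝓝 0) := by
      simpa using (hxu.const_mul 2).add hzu
    have hqw : q = w := by
      refine eq_of_tendsto_inner_of_norm_sub_le hwu hbdd (hε.mono_left hl)
        (.of_forall fun n => ?_)
      have huq := ((hs n).proj_u j).norm_sub_le_of_inverseStronglyMonotone hC hq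
        (hA j _ (hs n).proj_z.1 w hwC) (Set.Ioo_subset_Icc_self hlam)
      linarith [norm_sub_le_norm_sub_add_norm_sub (u n (k n)) (u n j) q,
        (hs n).norm_u_sub_le j, norm_sub_le_norm_sub_add_norm_sub (z n) (u n (k n)) w]
    exact (isMetricProj_sub_smul_self_iff hC hwC hlam.1 _).mp (hqw ▸ hq)

end ParallelHybrid

theorem parallel_hybrid_modified_convergence_general
    {H : Type*} [NormedAddCommGroup H] [InnerProductSpace ℝ H] [CompleteSpace H]
    -- `C` is a nonempty closed convex subset of `H`
    (C : Set H) (hCcl : IsClosed C) (hCcv : Convex ℝ C)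
    (M N : ℕ)
    -- the mappings `A_k : C → H` are `α`-inverse strongly monotone
    (α : ℝ) (A : Fin M → H → H)
    (hA : ∀ k, ∀ p ∈ C, ∀ q ∈ C, α * ‖A k p - A k q‖ ^ 2 ≤ ⟪A k p - A k q, p - q⟫)
    -- the mappings `S_i : C → C` are nonexpansive
    (S : Fin N → H → H)
    (hS : ∀ i, ∀ p ∈ C, ∀ q ∈ C, ‖S i p - S i q‖ ≤ ‖p - q‖)
    -- parameters: `λ ∈ (0, 2α)`, `{α_n} ⊂ [0,1]` with `limsup α_n < 1`
    (lam : ℝ) (hlam : lam ∈ Set.Ioo 0 (2 * α))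
    (a : ℕ → ℝ) (ha : ∀ n, a n ∈ Set.Icc (0 : ℝ) 1)
    (ha' : Filter.limsup a Filter.atTop < 1)
    -- `F = (∩ F(S_i)) ∩ (∩ VI(A_k, C))` is nonempty
    (F : Set H)
    (hF : F = {p | p ∈ C ∧ (∀ i, S i p = p) ∧ (∀ k, ∀ q ∈ C, 0 ≤ ⟪A k p, q - p⟫)})
    -- the algorithm
    (x : ℕ → H) (z : ℕ → H) (uu : ℕ → Fin M → H) (y : ℕ → Fin N → H)
    (kn : ℕ → Fin M) (inn : ℕ → Fin N)
    (Cn Qn : ℕ → Set H)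
    -- `z_n = P_C x_n`
    (hz : ∀ n, IsMetricProj C (x n) (z n))
    -- `u_n^k = P_C(z_n - λ A_k z_n)`
    (hu : ∀ n k, IsMetricProj C (z n - lam • A k (z n)) (uu n k))
    -- `k_n` attains `max{‖u_n^k - x_n‖}`, `ū_n = u_n^{k_n}`
    (hkn : ∀ n k, ‖uu n k - x n‖ ≤ ‖uu n (kn n) - x n‖)
    -- `y_n^i = α_n ū_n + (1 - α_n) S_i ū_n`
    (hy : ∀ n i, y n i = a n • uu n (kn n) + (1 - a n) • S i (uu n (kn n)))
    -- `i_n` attains `max{‖y_n^i - x_n‖}`, `ȳ_n = y_n^{i_n}`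
    (hin : ∀ n i, ‖y n i - x n‖ ≤ ‖y n (inn n) - x n‖)
    -- `C_n = {v : ‖v - ȳ_n‖ ≤ ‖v - x_n‖}`
    (hCn : ∀ n, Cn n = {v | ‖v - y n (inn n)‖ ≤ ‖v - x n‖})
    -- `Q_n = {v : ⟨x_0 - x_n, x_n - v⟩ ≥ 0}`
    (hQn : ∀ n, Qn n = {v | 0 ≤ ⟪x 0 - x n, x n - v⟫})
    -- `x_{n+1} = P_{C_n ∩ Q_n} x_0`
    (hx : ∀ n, IsMetricProj (Cn n ∩ Qn n) (x 0) (x (n + 1)))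
    -- `P_F x_0`
    (p : H) (hp : IsMetricProj F (x 0) p) :
    Filter.Tendsto x Filter.atTop (nhds p) := by
  have hs : ∀ n, IsParallelStep C A S lam (a n) (x n) (z n) (uu n) (kn n) (y n) (inn n) :=
    fun n => ⟨hz n, hu n, hkn n, hy n, hin n⟩
  have hpF : IsCommonSolution C A S p := by
    have hpF := hp.1
    rwa [hF] at hpF
  have hCn_cv : ∀ n, Convex ℝ (Cn n) := fun n => hCn n ▸ convex_setOf_norm_sub_le_norm_sub _ _
  have hx' : ∀ n, IsMetricProj (Cn n ∩ {v | 0 ≤ ⟪x 0 - x n, x n - v⟫}) (x 0) (x (n + 1)) :=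
    fun n => hQn n ▸ hx n
  have hpCn : ∀ n, p ∈ Cn n := fun n => by
    obtain ⟨hyu, huz, hzx⟩ := (hs n).norm_sub_le_chain hCcv hA hS hlam (ha n) hpF
    rw [hCn n]
    exact (norm_sub_rev _ _).trans_le ((hyu.trans (huz.trans hzx)).trans_eq (norm_sub_rev _ _))
  have hreg : Tendsto (fun n => ‖y n (inn n) - x n‖) atTop (𝓝 0) :=
    tendsto_norm_sub_of_succ_mem (fun n => by have h := (hx n).1.1; rwa [hCn n] at h)
      (Hybrid.tendsto_norm_succ_sub hCn_cv hx' hpCn)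
  have hbdd := Hybrid.norm_sub_le hCn_cv hx' hpCn
  have hxp : ∀ n, ‖x n - p‖ ≤ 2 * ‖p - x 0‖ := fun n => by
    linarith [norm_sub_le_norm_sub_add_norm_sub (x n) (x 0) p, hbdd n, norm_sub_rev (x 0) p]
  obtain ⟨w, hw⟩ := exists_tendsto_inner_of_norm_le (Ultrafilter.of atTop) (u := x)
    (B := ‖p - x 0‖ + ‖x 0‖)
    fun n => by linarith [norm_le_norm_sub_add (x n) (x 0), hbdd n]
  have hwF : w ∈ F := by
    rw [hF]
    exact isCommonSolution_of_tendsto_inner hCcl hCcv hA hS hlam hs ha ha' hpF hxp hreg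
      (Ultrafilter.of_le atTop) hw
  exact Hybrid.tendsto_of_tendsto_inner hCn_cv hx' hpCn (Ultrafilter.of_le atTop) hw (hp.2 w hwF)

theorem parallel_hybrid_modified_convergence
    {H : Type*} [NormedAddCommGroup H] [InnerProductSpace ℝ H] [CompleteSpace H]
    -- `C` is a nonempty closed convex subset of `H`
    (C : Set H) (hCne : C.Nonempty) (hCcl : IsClosed C) (hCcv : Convex ℝ C)
    (M N : ℕ)
    -- the mappings `A_k : C → H` are `α`-inverse strongly monotone
    (α : ℝ) (hα : 0 < α) (A : Fin M → H → H)
    (hA : ∀ k, ∀ p ∈ C, ∀ q ∈ C, α * ‖A k p - A k q‖ ^ 2 ≤ ⟪A k p - A k q, p - q⟫)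
    -- the mappings `S_i : C → C` are nonexpansive
    (S : Fin N → H → H) (hSmap : ∀ i, ∀ p ∈ C, S i p ∈ C)
    (hS : ∀ i, ∀ p ∈ C, ∀ q ∈ C, ‖S i p - S i q‖ ≤ ‖p - q‖)
    -- parameters: `λ ∈ (0, 2α)`, `{α_n} ⊂ [0,1]` with `limsup α_n < 1`
    (lam : ℝ) (hlam : lam ∈ Set.Ioo 0 (2 * α))
    (a : ℕ → ℝ) (ha : ∀ n, a n ∈ Set.Icc (0 : ℝ) 1)
    (ha' : Filter.limsup a Filter.atTop < 1)
    -- `F = (∩ F(S_i)) ∩ (∩ VI(A_k, C))` is nonempty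
    (F : Set H)
    (hF : F = {p | p ∈ C ∧ (∀ i, S i p = p) ∧ (∀ k, ∀ q ∈ C, 0 ≤ ⟪A k p, q - p⟫)})
    (hFne : F.Nonempty)
    -- the algorithm
    (x : ℕ → H) (z : ℕ → H) (uu : ℕ → Fin M → H) (y : ℕ → Fin N → H)
    (kn : ℕ → Fin M) (inn : ℕ → Fin N)
    (Cn Qn : ℕ → Set H)
    -- `z_n = P_C x_n`
    (hz : ∀ n, IsMetricProj C (x n) (z n))
    -- `u_n^k = P_C(z_n - λ A_k z_n)`
    (hu : ∀ n k, IsMetricProj C (z n - lam • A k (z n)) (uu n k))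
    -- `k_n` attains `max{‖u_n^k - x_n‖}`, `ū_n = u_n^{k_n}`
    (hkn : ∀ n k, ‖uu n k - x n‖ ≤ ‖uu n (kn n) - x n‖)
    -- `y_n^i = α_n ū_n + (1 - α_n) S_i ū_n`
    (hy : ∀ n i, y n i = a n • uu n (kn n) + (1 - a n) • S i (uu n (kn n)))
    -- `i_n` attains `max{‖y_n^i - x_n‖}`, `ȳ_n = y_n^{i_n}`
    (hin : ∀ n i, ‖y n i - x n‖ ≤ ‖y n (inn n) - x n‖)
    -- `C_n = {v : ‖v - ȳ_n‖ ≤ ‖v - x_n‖}`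
    (hCn : ∀ n, Cn n = {v | ‖v - y n (inn n)‖ ≤ ‖v - x n‖})
    -- `Q_n = {v : ⟨x_0 - x_n, x_n - v⟩ ≥ 0}`
    (hQn : ∀ n, Qn n = {v | 0 ≤ ⟪x 0 - x n, x n - v⟫})
    -- `x_{n+1} = P_{C_n ∩ Q_n} x_0`
    (hx : ∀ n, IsMetricProj (Cn n ∩ Qn n) (x 0) (x (n + 1)))
    -- `P_F x_0`
    (p : H) (hp : IsMetricProj F (x 0) p) :
    Filter.Tendsto x Filter.atTop (nhds p) :=
  parallel_hybrid_modified_convergence_general C hCcl hCcv M N α A hA S hS lam hlam a ha ha' F hF x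
    z uu y kn inn Cn Qn hz hu hkn hy hin hCn hQn hx p hp
end

section
/- Under the stated hypotheses, for the parallel hybrid algorithm, every u ∈ F and every n ≥ 0 satisfy ‖u - ȳ_n‖ ≤ ‖u - z̄_n‖ ≤ ‖u - x_n‖. -/
open Filter Topology
open scoped RealInnerProductSpace

section

variable {H : Type*} [NormedAddCommGroup H] [InnerProductSpace ℝ H]

theorem IsMetricProj.inner_sub_le_zero {D : Set H} (hD : Convex ℝ D) {x p : H}
    (hp : IsMetricProj D x p) : ∀ w ∈ D, ⟪x - p, w - p⟫ ≤ 0 := by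
  have : Nonempty D := ⟨⟨p, hp.1⟩⟩
  refine (norm_eq_iInf_iff_real_inner_le_zero hD hp.1).mp (le_antisymm (le_ciInf fun w => ?_)
    (ciInf_le (f := fun w : D => ‖x - (w : H)‖)
      ⟨0, Set.forall_mem_range.mpr fun _ => norm_nonneg _⟩ ⟨p, hp.1⟩))
  rw [norm_sub_rev, norm_sub_rev x]
  exact hp.2 w w.2

theorem norm_sub_le_of_inner_sub_le_zero {x y p q : H}
    (hp : ⟪x - p, q - p⟫ ≤ 0) (hq : ⟪y - q, p - q⟫ ≤ 0) : ‖p - q‖ ≤ ‖x - y‖ := by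
  have hsq : ‖p - q‖ ^ 2 ≤ ⟪x - y, p - q⟫ := by
    have : ⟪x - y, p - q⟫ - ‖p - q‖ ^ 2 = -⟪x - p, q - p⟫ - ⟪y - q, p - q⟫ := by
      rw [← real_inner_self_eq_norm_sq]
      simp only [inner_sub_left, inner_sub_right]
      ring
    linarith
  nlinarith [real_inner_le_norm (x - y) (p - q), norm_nonneg (p - q), norm_nonneg (x - y)]

theorem norm_sub_smul_le_of_inner_ge {α lam : ℝ} {a b : H} (hab : α * ‖b‖ ^ 2 ≤ ⟪b, a⟫)
    (hlam₀ : 0 ≤ lam) (hlam : lam ≤ 2 * α) : ‖a - lam • b‖ ≤ ‖a‖ := by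
  refine (sq_le_sq₀ (norm_nonneg _) (norm_nonneg _)).mp ?_
  rw [norm_sub_sq_real, inner_smul_right, norm_smul, Real.norm_of_nonneg hlam₀, mul_pow,
    real_inner_comm]
  nlinarith [mul_nonneg hlam₀ (sub_nonneg.mpr hab),
    mul_nonneg (mul_nonneg hlam₀ (sub_nonneg.mpr hlam)) (sq_nonneg ‖b‖)]

theorem norm_sub_le_of_isMetricProj_sub_smul {D : Set H} (hD : Convex ℝ D) {A : H → H}
    {α lam : ℝ} {u z p : H} (hA : α * ‖A u - A z‖ ^ 2 ≤ ⟪A u - A z, u - z⟫)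
    (hlam₀ : 0 ≤ lam) (hlam : lam ≤ 2 * α) (hu : u ∈ D) (huVI : ∀ q ∈ D, 0 ≤ ⟪A u, q - u⟫)
    (hp : IsMetricProj D (z - lam • A z) p) : ‖u - p‖ ≤ ‖u - z‖ := by
  -- `u = P_D (u - lam • A u)`, by the variational inequality
  have hu_proj : ⟪(u - lam • A u) - u, p - u⟫ ≤ 0 := by
    rw [sub_sub_cancel_left, inner_neg_left, real_inner_smul_left, neg_nonpos]
    exact mul_nonneg hlam₀ (huVI p hp.1)
  calc ‖u - p‖ ≤ ‖(u - lam • A u) - (z - lam • A z)‖ :=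
        norm_sub_le_of_inner_sub_le_zero hu_proj (hp.inner_sub_le_zero hD u hu)
    _ = ‖(u - z) - lam • (A u - A z)‖ := by rw [smul_sub, sub_sub_sub_comm]
    _ ≤ ‖u - z‖ := norm_sub_smul_le_of_inner_ge hA hlam₀ hlam

theorem norm_sub_le_of_resolvent {g : H → H → ℝ} {r : ℝ} (hr : 0 < r) {x z u : H}
    (hg : g z u + g u z ≤ 0) (hu : 0 ≤ g u z) (hz : 0 ≤ g z u + 1 / r * ⟪u - z, z - x⟫) :
    ‖u - z‖ ≤ ‖u - x‖ := by
  have hinner : 0 ≤ ⟪u - z, z - x⟫ :=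
    nonneg_of_mul_nonneg_right (by linarith) (one_div_pos.mpr hr)
  refine (sq_le_sq₀ (norm_nonneg _) (norm_nonneg _)).mp ?_
  rw [← sub_add_sub_cancel u z x, norm_add_sq_real]
  nlinarith [sq_nonneg ‖z - x‖]

theorem norm_sub_smul_add_one_sub_smul_le {a : ℝ} (ha : a ∈ Set.Icc (0 : ℝ) 1) {u v w : H}
    (hw : ‖u - w‖ ≤ ‖u - v‖) : ‖u - (a • v + (1 - a) • w)‖ ≤ ‖u - v‖ := by
  have hball := convex_closedBall u ‖u - v‖ (x := v) (y := w)
    (by rw [mem_closedBall_iff_norm, norm_sub_rev]) (by rwa [mem_closedBall_iff_norm, norm_sub_rev])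
    ha.1 (sub_nonneg.mpr ha.2) (add_sub_cancel a 1)
  rwa [mem_closedBall_iff_norm, norm_sub_rev] at hball

end

theorem fejer_monotonicity_estimate_general
    {H : Type*} [NormedAddCommGroup H] [InnerProductSpace ℝ H]
    -- `C` is a nonempty closed convex subset of `H`
    (C : Set H) (hCcv : Convex ℝ C)
    (K M N : ℕ)
    -- the bifunctions `f_l : C × C → ℝ` satisfy conditions (A1)-(A4)
    (f : Fin K → H → H → ℝ)
    (hfA2 : ∀ l, ∀ p ∈ C, ∀ q ∈ C, f l p q + f l q p ≤ 0)
    -- the mappings `A_k : C → H` are `α`-inverse strongly monotone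
    (α : ℝ) (A : Fin M → H → H)
    (hA : ∀ k, ∀ p ∈ C, ∀ q ∈ C, α * ‖A k p - A k q‖ ^ 2 ≤ ⟪A k p - A k q, p - q⟫)
    -- the mappings `S_i : C → C` are nonexpansive
    (S : Fin N → H → H)
    (hS : ∀ i, ∀ p ∈ C, ∀ q ∈ C, ‖S i p - S i q‖ ≤ ‖p - q‖)
    -- parameters: `λ ∈ (0, 2α)`, `{α_n} ⊂ [0,1]`, `{r_n} ⊂ [d, ∞)`, `d > 0`
    (lam : ℝ) (hlam : lam ∈ Set.Ioo 0 (2 * α))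
    (a : ℕ → ℝ) (ha : ∀ n, a n ∈ Set.Icc (0 : ℝ) 1)
    (d : ℝ) (hd : 0 < d) (r : ℕ → ℝ) (hr : ∀ n, d ≤ r n)
    -- `F = (∩ EP(f_l)) ∩ (∩ F(S_i)) ∩ (∩ VI(A_k, C))` is nonempty
    (F : Set H)
    (hF : F = {p | p ∈ C ∧ (∀ l, ∀ q ∈ C, 0 ≤ f l p q) ∧ (∀ i, S i p = p) ∧
      (∀ k, ∀ q ∈ C, 0 ≤ ⟪A k p, q - p⟫)})
    -- the parallel hybrid algorithm
    (x : ℕ → H) (z : ℕ → Fin K → H) (uu : ℕ → Fin M → H) (y : ℕ → Fin N → H)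
    (ln : ℕ → Fin K) (kn : ℕ → Fin M) (inn : ℕ → Fin N)
    -- `z_n^l` solves the regularized equilibrium problem for `f_l` at `x_n`
    (hz : ∀ n l, z n l ∈ C ∧
      ∀ q ∈ C, 0 ≤ f l (z n l) q + (1 / r n) * ⟪q - z n l, z n l - x n⟫)
    -- `u_n^k = P_C(zbar_n - λ A_k zbar_n)`
    (hu : ∀ n k, IsMetricProj C (z n (ln n) - lam • A k (z n (ln n))) (uu n k))
    -- `y_n^i = α_n ubar_n + (1 - α_n) S_i ubar_n`
    (hy : ∀ n i, y n i = a n • uu n (kn n) + (1 - a n) • S i (uu n (kn n)))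
    :
    ∀ u ∈ F, ∀ n, ‖u - y n (inn n)‖ ≤ ‖u - z n (ln n)‖ ∧
      ‖u - z n (ln n)‖ ≤ ‖u - x n‖ := by
  intro u hu_mem n
  rw [hF] at hu_mem
  obtain ⟨huC, huEP, huFix, huVI⟩ := hu_mem
  set zbar := z n (ln n)
  set ubar := uu n (kn n)
  have hzbarC : zbar ∈ C := (hz n (ln n)).1
  have hzbar : ‖u - zbar‖ ≤ ‖u - x n‖ :=
    norm_sub_le_of_resolvent (hd.trans_le (hr n)) (hfA2 (ln n) zbar hzbarC u huC)
      (huEP (ln n) zbar hzbarC) ((hz n (ln n)).2 u huC)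
  have hubar : ‖u - ubar‖ ≤ ‖u - zbar‖ :=
    norm_sub_le_of_isMetricProj_sub_smul hCcv (hA (kn n) u huC zbar hzbarC) hlam.1.le
      hlam.2.le huC (huVI (kn n)) (hu n (kn n))
  have hybar : ‖u - y n (inn n)‖ ≤ ‖u - ubar‖ := by
    rw [hy]
    refine norm_sub_smul_add_one_sub_smul_le (ha n) ?_
    simpa only [huFix] using hS (inn n) u huC ubar (hu n (kn n)).1
  exact ⟨hybar.trans hubar, hzbar⟩

theorem fejer_monotonicity_estimate
    {H : Type*} [NormedAddCommGroup H] [InnerProductSpace ℝ H] [CompleteSpace H]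
    -- `C` is a nonempty closed convex subset of `H`
    (C : Set H) (hCne : C.Nonempty) (hCcl : IsClosed C) (hCcv : Convex ℝ C)
    (K M N : ℕ)
    -- the bifunctions `f_l : C × C → ℝ` satisfy conditions (A1)-(A4)
    (f : Fin K → H → H → ℝ)
    (hfA1 : ∀ l, ∀ p ∈ C, f l p p = 0)
    (hfA2 : ∀ l, ∀ p ∈ C, ∀ q ∈ C, f l p q + f l q p ≤ 0)
    (hfA3 : ∀ l, ∀ p ∈ C, ∀ q ∈ C, ∀ w ∈ C,
      Filter.limsup (fun t : ℝ => f l (t • w + (1 - t) • p) q)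
        (nhdsWithin 0 (Set.Ioi 0)) ≤ f l p q)
    (hfA4cv : ∀ l, ∀ p ∈ C, ConvexOn ℝ C (f l p))
    (hfA4lsc : ∀ l, ∀ p ∈ C, LowerSemicontinuousOn (f l p) C)
    -- the mappings `A_k : C → H` are `α`-inverse strongly monotone
    (α : ℝ) (hα : 0 < α) (A : Fin M → H → H)
    (hA : ∀ k, ∀ p ∈ C, ∀ q ∈ C, α * ‖A k p - A k q‖ ^ 2 ≤ ⟪A k p - A k q, p - q⟫)
    -- the mappings `S_i : C → C` are nonexpansive
    (S : Fin N → H → H) (hSmap : ∀ i, ∀ p ∈ C, S i p ∈ C)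
    (hS : ∀ i, ∀ p ∈ C, ∀ q ∈ C, ‖S i p - S i q‖ ≤ ‖p - q‖)
    -- parameters: `λ ∈ (0, 2α)`, `{α_n} ⊂ [0,1]`, `{r_n} ⊂ [d, ∞)`, `d > 0`
    (lam : ℝ) (hlam : lam ∈ Set.Ioo 0 (2 * α))
    (a : ℕ → ℝ) (ha : ∀ n, a n ∈ Set.Icc (0 : ℝ) 1)
    (d : ℝ) (hd : 0 < d) (r : ℕ → ℝ) (hr : ∀ n, d ≤ r n)
    -- `F = (∩ EP(f_l)) ∩ (∩ F(S_i)) ∩ (∩ VI(A_k, C))` is nonempty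
    (F : Set H)
    (hF : F = {p | p ∈ C ∧ (∀ l, ∀ q ∈ C, 0 ≤ f l p q) ∧ (∀ i, S i p = p) ∧
      (∀ k, ∀ q ∈ C, 0 ≤ ⟪A k p, q - p⟫)})
    (hFne : F.Nonempty)
    -- the parallel hybrid algorithm
    (x : ℕ → H) (z : ℕ → Fin K → H) (uu : ℕ → Fin M → H) (y : ℕ → Fin N → H)
    (ln : ℕ → Fin K) (kn : ℕ → Fin M) (inn : ℕ → Fin N)
    (Cn Qn : ℕ → Set H)
    -- `z_n^l` solves the regularized equilibrium problem for `f_l` at `x_n`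
    (hz : ∀ n l, z n l ∈ C ∧
      ∀ q ∈ C, 0 ≤ f l (z n l) q + (1 / r n) * ⟪q - z n l, z n l - x n⟫)
    -- `l_n` attains `max{‖z_n^l - x_n‖}`, `z̄_n = z_n^{l_n}`
    (hln : ∀ n l, ‖z n l - x n‖ ≤ ‖z n (ln n) - x n‖)
    -- `u_n^k = P_C(z̄_n - λ A_k z̄_n)`
    (hu : ∀ n k, IsMetricProj C (z n (ln n) - lam • A k (z n (ln n))) (uu n k))
    -- `k_n` attains `max{‖u_n^k - x_n‖}`, `ū_n = u_n^{k_n}`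
    (hkn : ∀ n k, ‖uu n k - x n‖ ≤ ‖uu n (kn n) - x n‖)
    -- `y_n^i = α_n ū_n + (1 - α_n) S_i ū_n`
    (hy : ∀ n i, y n i = a n • uu n (kn n) + (1 - a n) • S i (uu n (kn n)))
    -- `i_n` attains `max{‖y_n^i - x_n‖}`, `ȳ_n = y_n^{i_n}`
    (hin : ∀ n i, ‖y n i - x n‖ ≤ ‖y n (inn n) - x n‖)
    -- `C_n = {v : ‖v - ȳ_n‖ ≤ ‖v - z̄_n‖ ≤ ‖v - x_n‖}`
    (hCn : ∀ n, Cn n = {v | ‖v - y n (inn n)‖ ≤ ‖v - z n (ln n)‖ ∧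
      ‖v - z n (ln n)‖ ≤ ‖v - x n‖})
    -- `Q_n = {v : ⟨x_0 - x_n, x_n - v⟩ ≥ 0}`
    (hQn : ∀ n, Qn n = {v | 0 ≤ ⟪x 0 - x n, x n - v⟫})
    -- `x_{n+1} = P_{C_n ∩ Q_n} x_0`
    (hx : ∀ n, IsMetricProj (Cn n ∩ Qn n) (x 0) (x (n + 1)))
    :
    ∀ u ∈ F, ∀ n, ‖u - y n (inn n)‖ ≤ ‖u - z n (ln n)‖ ∧
      ‖u - z n (ln n)‖ ≤ ‖u - x n‖ :=
  fejer_monotonicity_estimate_general C hCcv K M N f hfA2 α A hA S hS lam hlam a ha d hd r hr F hF x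
    z uu y ln kn inn hz hu hy
end

section
/- Under the stated hypotheses, for the parallel hybrid algorithm, the sequence {x_n} is bounded, the sequence {‖x_n - x_0‖} is nondecreasing and convergent, and lim_{n→∞} ‖x_{n+1} - x_n‖ = 0; moreover lim_{n→∞} ‖x_n - y_n^i‖ = 0 for every i = 1,…,N and lim_{n→∞} ‖x_n - z_n^l‖ = 0 for every l = 1,…,K. -/
open Filter Topology
open scoped RealInnerProductSpace

section helpers
variable {H : Type*} [NormedAddCommGroup H] [InnerProductSpace ℝ H]

lemma le_of_sq_le' {a b : ℝ} (ha : 0 ≤ a) (hb : 0 ≤ b) (h : a^2 ≤ b^2) : a ≤ b := by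
  nlinarith

lemma metricProj_inner_le_s8 {D : Set H} (hD : Convex ℝ D) {x q : H}
    (h : IsMetricProj D x q) : ∀ w ∈ D, ⟪x - q, w - q⟫ ≤ 0 := by
  have hq := h.1
  haveI : Nonempty D := ⟨⟨q, hq⟩⟩
  have heq : ‖x - q‖ = ⨅ w : D, ‖x - w‖ := by
    apply le_antisymm
    · apply le_ciInf; intro w
      rw [norm_sub_rev, norm_sub_rev x]
      exact h.2 w w.2
    · exact ciInf_le ⟨0, fun b ⟨w, hw⟩ => hw ▸ norm_nonneg _⟩ (⟨q, hq⟩ : D)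
  exact (norm_eq_iInf_iff_real_inner_le_zero hD hq).1 heq

lemma convex_inner_halfspace (w : H) (r : ℝ) : Convex ℝ {v : H | ⟪v, w⟫ ≤ r} :=
  convex_halfSpace_le ⟨fun x y => inner_add_left x y w, fun c x => real_inner_smul_left x w c⟩ r

lemma convex_bisector (a b : H) : Convex ℝ {v : H | ‖v - a‖ ≤ ‖v - b‖} := by
  have h : {v : H | ‖v - a‖ ≤ ‖v - b‖}
      = {v : H | ⟪v, b - a⟫ ≤ (⟪b,b⟫ - ⟪a,a⟫)/2} := by
    ext v
    simp only [Set.mem_setOf_eq]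
    rw [mul_self_le_mul_self_iff (norm_nonneg (v-a)) (norm_nonneg (v-b)),
      ← real_inner_self_eq_norm_mul_norm, ← real_inner_self_eq_norm_mul_norm,
      real_inner_sub_sub_self, real_inner_sub_sub_self, inner_sub_right]
    constructor <;> intro h <;> linarith
  rw [h]
  exact convex_inner_halfspace _ _

end helpers

theorem asymptotic_regularity
    {H : Type*} [NormedAddCommGroup H] [InnerProductSpace ℝ H] [CompleteSpace H]
    -- `C` is a nonempty closed convex subset of `H`
    (C : Set H) (hCne : C.Nonempty) (hCcl : IsClosed C) (hCcv : Convex ℝ C)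
    (K M N : ℕ)
    -- the bifunctions `f_l : C × C → ℝ` satisfy conditions (A1)-(A4)
    (f : Fin K → H → H → ℝ)
    (hfA1 : ∀ l, ∀ p ∈ C, f l p p = 0)
    (hfA2 : ∀ l, ∀ p ∈ C, ∀ q ∈ C, f l p q + f l q p ≤ 0)
    (hfA3 : ∀ l, ∀ p ∈ C, ∀ q ∈ C, ∀ w ∈ C,
      Filter.limsup (fun t : ℝ => f l (t • w + (1 - t) • p) q)
        (nhdsWithin 0 (Set.Ioi 0)) ≤ f l p q)
    (hfA4cv : ∀ l, ∀ p ∈ C, ConvexOn ℝ C (f l p))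
    (hfA4lsc : ∀ l, ∀ p ∈ C, LowerSemicontinuousOn (f l p) C)
    -- the mappings `A_k : C → H` are `α`-inverse strongly monotone
    (α : ℝ) (hα : 0 < α) (A : Fin M → H → H)
    (hA : ∀ k, ∀ p ∈ C, ∀ q ∈ C, α * ‖A k p - A k q‖ ^ 2 ≤ ⟪A k p - A k q, p - q⟫)
    -- the mappings `S_i : C → C` are nonexpansive
    (S : Fin N → H → H) (hSmap : ∀ i, ∀ p ∈ C, S i p ∈ C)
    (hS : ∀ i, ∀ p ∈ C, ∀ q ∈ C, ‖S i p - S i q‖ ≤ ‖p - q‖)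
    -- parameters: `λ ∈ (0, 2α)`, `{α_n} ⊂ [0,1]`, `{r_n} ⊂ [d, ∞)`, `d > 0`
    (lam : ℝ) (hlam : lam ∈ Set.Ioo 0 (2 * α))
    (a : ℕ → ℝ) (ha : ∀ n, a n ∈ Set.Icc (0 : ℝ) 1)
    (ha' : Filter.limsup a Filter.atTop < 1)
    (d : ℝ) (hd : 0 < d) (r : ℕ → ℝ) (hr : ∀ n, d ≤ r n)
    -- `F = (∩ EP(f_l)) ∩ (∩ F(S_i)) ∩ (∩ VI(A_k, C))` is nonempty
    (F : Set H)
    (hF : F = {p | p ∈ C ∧ (∀ l, ∀ q ∈ C, 0 ≤ f l p q) ∧ (∀ i, S i p = p) ∧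
      (∀ k, ∀ q ∈ C, 0 ≤ ⟪A k p, q - p⟫)})
    (hFne : F.Nonempty)
    -- the parallel hybrid algorithm
    (x : ℕ → H) (z : ℕ → Fin K → H) (uu : ℕ → Fin M → H) (y : ℕ → Fin N → H)
    (ln : ℕ → Fin K) (kn : ℕ → Fin M) (inn : ℕ → Fin N)
    (Cn Qn : ℕ → Set H)
    -- `z_n^l` solves the regularized equilibrium problem for `f_l` at `x_n`
    (hz : ∀ n l, z n l ∈ C ∧
      ∀ q ∈ C, 0 ≤ f l (z n l) q + (1 / r n) * ⟪q - z n l, z n l - x n⟫)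
    -- `l_n` attains `max{‖z_n^l - x_n‖}`, `z̄_n = z_n^{l_n}`
    (hln : ∀ n l, ‖z n l - x n‖ ≤ ‖z n (ln n) - x n‖)
    -- `u_n^k = P_C(z̄_n - λ A_k z̄_n)`
    (hu : ∀ n k, IsMetricProj C (z n (ln n) - lam • A k (z n (ln n))) (uu n k))
    -- `k_n` attains `max{‖u_n^k - x_n‖}`, `ū_n = u_n^{k_n}`
    (hkn : ∀ n k, ‖uu n k - x n‖ ≤ ‖uu n (kn n) - x n‖)
    -- `y_n^i = α_n ū_n + (1 - α_n) S_i ū_n`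
    (hy : ∀ n i, y n i = a n • uu n (kn n) + (1 - a n) • S i (uu n (kn n)))
    -- `i_n` attains `max{‖y_n^i - x_n‖}`, `ȳ_n = y_n^{i_n}`
    (hin : ∀ n i, ‖y n i - x n‖ ≤ ‖y n (inn n) - x n‖)
    -- `C_n = {v : ‖v - ȳ_n‖ ≤ ‖v - z̄_n‖ ≤ ‖v - x_n‖}`
    (hCn : ∀ n, Cn n = {v | ‖v - y n (inn n)‖ ≤ ‖v - z n (ln n)‖ ∧
      ‖v - z n (ln n)‖ ≤ ‖v - x n‖})
    -- `Q_n = {v : ⟨x_0 - x_n, x_n - v⟩ ≥ 0}`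
    (hQn : ∀ n, Qn n = {v | 0 ≤ ⟪x 0 - x n, x n - v⟫})
    -- `x_{n+1} = P_{C_n ∩ Q_n} x_0`
    (hx : ∀ n, IsMetricProj (Cn n ∩ Qn n) (x 0) (x (n + 1)))
    :
    Bornology.IsBounded (Set.range x) ∧
    Monotone (fun n => ‖x n - x 0‖) ∧
    (∃ L : ℝ, Filter.Tendsto (fun n => ‖x n - x 0‖) Filter.atTop (nhds L)) ∧
    Filter.Tendsto (fun n => ‖x (n + 1) - x n‖) Filter.atTop (nhds 0) ∧
    (∀ i, Filter.Tendsto (fun n => ‖x n - y n i‖) Filter.atTop (nhds 0)) ∧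
    (∀ l, Filter.Tendsto (fun n => ‖x n - z n l‖) Filter.atTop (nhds 0)) := by
  obtain ⟨p, hp⟩ := hFne
  rw [hF] at hp
  obtain ⟨pC, pEP, pFix, pVI⟩ := hp
  have tri : ∀ u v w : H, ‖u - w‖ ≤ ‖u - v‖ + ‖v - w‖ := fun u v w => by
    rw [show u - w = (u - v) + (v - w) from by abel]; exact norm_add_le _ _
  -- (a)
  have hzle : ∀ n l, ‖z n l - p‖ ≤ ‖x n - p‖ := by
    intro n l
    obtain ⟨hzC, hzi⟩ := hz n l
    have h1 := hzi p pC
    have h2 := pEP l (z n l) hzC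
    have h3 := hfA2 l p pC (z n l) hzC
    have hrpos : 0 < r n := lt_of_lt_of_le hd (hr n)
    have h4 : 0 ≤ ⟪p - z n l, z n l - x n⟫ := by
      by_contra hneg
      push_neg at hneg
      have : (1 / r n) * ⟪p - z n l, z n l - x n⟫ < 0 :=
        mul_neg_of_pos_of_neg (by positivity) hneg
      linarith
    have e : ⟪z n l - p, z n l - p⟫
        = ⟪z n l - p, z n l - x n⟫ + ⟪z n l - p, x n - p⟫ := by
      rw [← inner_add_right]
      congr 1
      abel
    have h6 : ⟪z n l - p, z n l - x n⟫ ≤ 0 := by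
      rw [show z n l - p = -(p - z n l) from (neg_sub _ _).symm, inner_neg_left]
      linarith
    have h7 := real_inner_le_norm (z n l - p) (x n - p)
    have h8 : ⟪z n l - p, z n l - p⟫ = ‖z n l - p‖ * ‖z n l - p‖ :=
      real_inner_self_eq_norm_mul_norm _
    have h9 : ‖z n l - p‖ * ‖z n l - p‖ ≤ ‖z n l - p‖ * ‖x n - p‖ := by
      nlinarith
    nlinarith [norm_nonneg (z n l - p), norm_nonneg (x n - p)]
  -- (b)
  have huleb : ∀ n k, ‖uu n k - p‖ ≤ ‖z n (ln n) - p‖ := by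
    intro n k
    set zb := z n (ln n) with hzbdef
    set u := uu n k with hudef
    set w1 := zb - lam • A k zb with hw1
    set w2 := p - lam • A k p with hw2
    have hzbC : zb ∈ C := (hz n (ln n)).1
    have huC : u ∈ C := (hu n k).1
    have h1 : ⟪w1 - u, p - u⟫ ≤ 0 := metricProj_inner_le_s8 hCcv (hu n k) p pC
    have h2 : ⟪w2 - p, u - p⟫ ≤ 0 := by
      rw [show w2 - p = -(lam • A k p) from by rw [hw2]; abel, inner_neg_left,
        real_inner_smul_left]
      have := pVI k u huC
      nlinarith [hlam.1]
    have e : ⟪w1 - w2, u - p⟫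
        = ⟪w1 - u, u - p⟫ + ⟪u - p, u - p⟫ + ⟪p - w2, u - p⟫ := by
      rw [← inner_add_left, ← inner_add_left]
      congr 1
      abel
    have h1' : 0 ≤ ⟪w1 - u, u - p⟫ := by
      rw [show u - p = -(p - u) from (neg_sub _ _).symm, inner_neg_right]
      linarith
    have h2' : 0 ≤ ⟪p - w2, u - p⟫ := by
      rw [show p - w2 = -(w2 - p) from (neg_sub _ _).symm, inner_neg_left]
      linarith
    have h8 : ⟪u - p, u - p⟫ = ‖u - p‖ * ‖u - p‖ := real_inner_self_eq_norm_mul_norm _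
    have key : ‖u - p‖ * ‖u - p‖ ≤ ‖w1 - w2‖ * ‖u - p‖ := by
      have h3 := real_inner_le_norm (w1 - w2) (u - p)
      linarith
    have hnorm2 : ‖w1 - w2‖^2 ≤ ‖zb - p‖^2 := by
      have e2 : w1 - w2 = (zb - p) - lam • (A k zb - A k p) := by
        rw [hw1, hw2, smul_sub]; abel
      rw [e2, norm_sub_sq_real, real_inner_smul_right, norm_smul, Real.norm_eq_abs,
        abs_of_pos hlam.1, mul_pow]
      have hAk := hA k zb hzbC p pC
      have hc : ⟪zb - p, A k zb - A k p⟫ = ⟪A k zb - A k p, zb - p⟫ := real_inner_comm _ _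
      nlinarith [sq_nonneg ‖A k zb - A k p‖, hlam.1, hlam.2,
        mul_le_mul_of_nonneg_left hAk hlam.1.le,
        mul_nonneg (mul_nonneg hlam.1.le (sub_nonneg.2 hlam.2.le))
          (sq_nonneg ‖A k zb - A k p‖)]
    have hnorm : ‖w1 - w2‖ ≤ ‖zb - p‖ :=
      le_of_sq_le' (norm_nonneg _) (norm_nonneg _) hnorm2
    nlinarith [norm_nonneg (u - p), norm_nonneg (zb - p), norm_nonneg (w1 - w2)]
  -- (c)
  have hyle : ∀ n i, ‖y n i - p‖ ≤ ‖uu n (kn n) - p‖ := by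
    intro n i
    set u := uu n (kn n) with hudef
    have huC : u ∈ C := (hu n (kn n)).1
    have e : y n i - p = a n • (u - p) + (1 - a n) • (S i u - p) := by
      rw [hy n i]; module
    rw [e]
    have hS1 : ‖S i u - p‖ ≤ ‖u - p‖ := by
      have := hS i u huC p pC
      rwa [pFix i] at this
    have ha1 := (ha n).1
    have ha2 := (ha n).2
    calc ‖a n • (u - p) + (1 - a n) • (S i u - p)‖
        ≤ ‖a n • (u - p)‖ + ‖(1 - a n) • (S i u - p)‖ := norm_add_le _ _
      _ = a n * ‖u - p‖ + (1 - a n) * ‖S i u - p‖ := by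
          rw [norm_smul, norm_smul, Real.norm_eq_abs, Real.norm_eq_abs,
            abs_of_nonneg ha1, abs_of_nonneg (by linarith)]
      _ ≤ a n * ‖u - p‖ + (1 - a n) * ‖u - p‖ := by nlinarith
      _ = ‖u - p‖ := by ring
  -- p ∈ Cn n
  have hpCn : ∀ n, p ∈ Cn n := by
    intro n
    rw [hCn n]
    refine ⟨?_, ?_⟩
    · rw [norm_sub_rev p (y n (inn n)), norm_sub_rev p (z n (ln n))]
      exact le_trans (hyle n (inn n)) (huleb n (kn n))
    · rw [norm_sub_rev p (z n (ln n)), norm_sub_rev p (x n)]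
      exact hzle n (ln n)
  -- convexity
  have hconv : ∀ n, Convex ℝ (Cn n ∩ Qn n) := by
    intro n
    apply Convex.inter
    · rw [hCn n]
      exact (convex_bisector (y n (inn n)) (z n (ln n))).inter
        (convex_bisector (z n (ln n)) (x n))
    · rw [hQn n]
      have hset : {v : H | 0 ≤ ⟪x 0 - x n, x n - v⟫}
          = {v : H | ⟪v, x 0 - x n⟫ ≤ ⟪x 0 - x n, x n⟫} := by
        ext v
        simp only [Set.mem_setOf_eq]
        rw [inner_sub_right, real_inner_comm v (x 0 - x n)]
        constructor <;> intro <;> linarith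
      rw [hset]
      exact convex_inner_halfspace _ _
  -- p ∈ Qn n
  have hpQn : ∀ n, p ∈ Qn n := by
    intro n
    induction n with
    | zero => rw [hQn 0]; simp
    | succ n ih =>
      have hVI := metricProj_inner_le_s8 (hconv n) (hx n) p ⟨hpCn n, ih⟩
      rw [hQn (n+1)]
      simp only [Set.mem_setOf_eq]
      rw [show x (n+1) - p = -(p - x (n+1)) from (neg_sub _ _).symm, inner_neg_right]
      linarith
  -- star inequality
  have hstar : ∀ n, ‖x (n+1) - x n‖^2 + ‖x n - x 0‖^2 ≤ ‖x (n+1) - x 0‖^2 := by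
    intro n
    have hq : x (n+1) ∈ Qn n := (hx n).1.2
    rw [hQn n] at hq
    simp only [Set.mem_setOf_eq] at hq
    have e : ‖x (n+1) - x 0‖^2
        = ‖x (n+1) - x n‖^2 + 2*⟪x (n+1) - x n, x n - x 0⟫ + ‖x n - x 0‖^2 := by
      rw [show x (n+1) - x 0 = (x (n+1) - x n) + (x n - x 0) from by abel, norm_add_sq_real]
    have e2 : ⟪x (n+1) - x n, x n - x 0⟫ = ⟪x 0 - x n, x n - x (n+1)⟫ := by
      rw [show x (n+1) - x n = -(x n - x (n+1)) from (neg_sub _ _).symm,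
        show x n - x 0 = -(x 0 - x n) from (neg_sub _ _).symm, inner_neg_neg,
        real_inner_comm]
    linarith
  -- bound
  have hbound : ∀ n, ‖x n - x 0‖ ≤ ‖p - x 0‖ := by
    intro n
    cases n with
    | zero => simp
    | succ n => exact (hx n).2 p ⟨hpCn n, hpQn n⟩
  -- monotone
  have hmono : Monotone (fun n => ‖x n - x 0‖) := by
    apply monotone_nat_of_le_succ
    intro n
    have h1 := hstar n
    have h2 := sq_nonneg ‖x (n+1) - x n‖
    exact le_of_sq_le' (norm_nonneg _) (norm_nonneg _) (by linarith)
  -- limit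
  have hbdd : BddAbove (Set.range fun n => ‖x n - x 0‖) :=
    ⟨‖p - x 0‖, by rintro t ⟨n, rfl⟩; exact hbound n⟩
  have hL : Tendsto (fun n => ‖x n - x 0‖) atTop (𝓝 (⨆ n, ‖x n - x 0‖)) :=
    tendsto_atTop_ciSup hmono hbdd
  -- diff to zero
  have hdiff : Tendsto (fun n => ‖x (n+1) - x n‖) atTop (𝓝 0) := by
    have ha1 : Tendsto (fun n => ‖x (n+1) - x 0‖) atTop (𝓝 (⨆ n, ‖x n - x 0‖)) :=
      hL.comp (tendsto_add_atTop_nat 1)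
    have h1 : Tendsto (fun n => ‖x (n+1) - x 0‖^2 - ‖x n - x 0‖^2) atTop (𝓝 0) := by
      have := (ha1.pow 2).sub (hL.pow 2)
      simpa using this
    have h2 : Tendsto (fun n => ‖x (n+1) - x n‖^2) atTop (𝓝 0) :=
      squeeze_zero (fun n => sq_nonneg _) (fun n => by linarith [hstar n]) h1
    have h3 := h2.sqrt
    rw [Real.sqrt_zero] at h3
    have e : (fun n => Real.sqrt (‖x (n+1) - x n‖^2)) = fun n => ‖x (n+1) - x n‖ :=
      funext fun n => Real.sqrt_sq (norm_nonneg _)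
    rwa [e] at h3
  -- Cn membership of x(n+1)
  have hxCn : ∀ n, ‖x (n+1) - y n (inn n)‖ ≤ ‖x (n+1) - x n‖ ∧
      ‖x (n+1) - z n (ln n)‖ ≤ ‖x (n+1) - x n‖ := by
    intro n
    have h := (hx n).1.1
    rw [hCn n] at h
    exact ⟨le_trans h.1 h.2, h.2⟩
  have hdiff2 : Tendsto (fun n => 2 * ‖x (n+1) - x n‖) atTop (𝓝 0) := by
    simpa using hdiff.const_mul 2
  refine ⟨?_, hmono, ⟨_, hL⟩, hdiff, ?_, ?_⟩
  · apply (Metric.isBounded_closedBall (x := x 0) (r := ‖p - x 0‖)).subset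
    rintro _ ⟨n, rfl⟩
    rw [Metric.mem_closedBall, dist_eq_norm]
    exact hbound n
  · intro i
    apply squeeze_zero (g := fun n => 2 * ‖x (n+1) - x n‖) (fun n => norm_nonneg _) _ hdiff2
    intro n
    have h1 := hin n i
    have h2 := (hxCn n).1
    have h3 := tri (y n (inn n)) (x (n+1)) (x n)
    have h4 : ‖y n (inn n) - x (n+1)‖ = ‖x (n+1) - y n (inn n)‖ := norm_sub_rev _ _
    have h5 : ‖x n - y n i‖ = ‖y n i - x n‖ := norm_sub_rev _ _
    show ‖x n - y n i‖ ≤ 2 * ‖x (n + 1) - x n‖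
    linarith
  · intro l
    apply squeeze_zero (g := fun n => 2 * ‖x (n+1) - x n‖) (fun n => norm_nonneg _) _ hdiff2
    intro n
    have h1 := hln n l
    have h2 := (hxCn n).2
    have h3 := tri (z n (ln n)) (x (n+1)) (x n)
    have h4 : ‖z n (ln n) - x (n+1)‖ = ‖x (n+1) - z n (ln n)‖ := norm_sub_rev _ _
    have h5 : ‖x n - z n l‖ = ‖z n l - x n‖ := norm_sub_rev _ _
    show ‖x n - z n l‖ ≤ 2 * ‖x (n + 1) - x n‖
    linarith
end

section
/- Under the stated hypotheses, for the parallel hybrid algorithm, for every u ∈ F, every n ≥ 0 and every i = 1,…,N one has ‖u - y_n^i‖² ≤ ‖u - ū_n‖² ≤ ‖u - x_n‖² - λ(2α - λ)‖A_{k_n} z̄_n - A_{k_n} u‖². -/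
/-!
Fix `u ∈ F`. Monotonicity of `f_l` together with `u ∈ EP(f_l)` makes the resolvent step
quasi-nonexpansive, `‖u - z̄_n‖ ≤ ‖u - x_n‖`. Since `u ∈ VI(A_k, C)`, `u` is the projection of
`u - λ A_k u` onto `C`, so nonexpansiveness of `P_C` and inverse strong monotonicity of `A_k`
give `‖u - ū_n‖² ≤ ‖u - z̄_n‖² - λ(2α - λ)‖A_k z̄_n - A_k u‖²`. Finally `y_n^i` is a convex
combination of `ū_n` and `S_i ū_n`, both in the closed ball of radius `‖u - ū_n‖` about the
fixed point `u`.
-/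

open Filter Topology
open scoped RealInnerProductSpace

section
variable {H : Type*} [NormedAddCommGroup H] [InnerProductSpace ℝ H]

theorem IsMetricProj.iff_real_inner_le_zero {D : Set H} (hD : Convex ℝ D) {x p : H}
    (hp : p ∈ D) : IsMetricProj D x p ↔ ∀ w ∈ D, ⟪x - p, w - p⟫ ≤ 0 := by
  have : Nonempty D := ⟨⟨p, hp⟩⟩
  have hbdd : BddBelow (Set.range fun w : D => ‖x - w‖) :=
    ⟨0, by rintro _ ⟨w, rfl⟩; exact norm_nonneg _⟩
  rw [← norm_eq_iInf_iff_real_inner_le_zero hD hp]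
  simp only [IsMetricProj, hp, true_and, norm_sub_rev _ x]
  exact ⟨fun h => le_antisymm (le_ciInf fun w => h w w.2) (ciInf_le hbdd ⟨p, hp⟩),
    fun h w hw => h ▸ ciInf_le hbdd ⟨w, hw⟩⟩

theorem IsMetricProj.norm_sub_le_s9 {D : Set H} (hD : Convex ℝ D) {x x' p p' : H}
    (hp : IsMetricProj D x p) (hp' : IsMetricProj D x' p') : ‖p - p'‖ ≤ ‖x - x'‖ := by
  have h := (IsMetricProj.iff_real_inner_le_zero hD hp.1).1 hp p' hp'.1
  have h' := (IsMetricProj.iff_real_inner_le_zero hD hp'.1).1 hp' p hp.1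
  have hfirm : ‖p - p'‖ ^ 2 ≤ ⟪x - x', p - p'⟫ := by
    have : ⟪x - x', p - p'⟫ - ‖p - p'‖ ^ 2 = -⟪x - p, p' - p⟫ - ⟪x' - p', p - p'⟫ := by
      rw [← real_inner_self_eq_norm_sq]
      simp only [inner_sub_left, inner_sub_right, real_inner_comm]
      ring
    linarith
  nlinarith [real_inner_le_norm (x - x') (p - p'), norm_nonneg (p - p'), norm_nonneg (x - x')]

theorem isMetricProj_sub_smul_of_forall_inner_nonneg {D : Set H} (hD : Convex ℝ D) {u a : H}
    {lam : ℝ} (hlam : 0 ≤ lam) (hu : u ∈ D) (hvi : ∀ q ∈ D, 0 ≤ ⟪a, q - u⟫) :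
    IsMetricProj D (u - lam • a) u := by
  refine (IsMetricProj.iff_real_inner_le_zero hD hu).2 fun w hw => ?_
  rw [sub_sub_cancel_left, inner_neg_left, real_inner_smul_left, neg_nonpos]
  exact mul_nonneg hlam (hvi w hw)

theorem norm_sub_sq_le_of_real_inner_nonneg {u v x : H} (h : 0 ≤ ⟪u - v, v - x⟫) :
    ‖u - v‖ ^ 2 ≤ ‖u - x‖ ^ 2 := by
  rw [← sub_add_sub_cancel u v x, norm_add_sq_real]
  nlinarith [sq_nonneg ‖v - x‖]

theorem norm_sub_resolvent_sq_le {C : Set H} {f : H → H → ℝ}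
    (hf : ∀ p ∈ C, ∀ q ∈ C, f p q + f q p ≤ 0) {r : ℝ} (hr : 0 < r) {x z u : H}
    (hz : z ∈ C) (hres : ∀ q ∈ C, 0 ≤ f z q + 1 / r * ⟪q - z, z - x⟫)
    (hu : u ∈ C) (hEP : ∀ q ∈ C, 0 ≤ f u q) : ‖u - z‖ ^ 2 ≤ ‖u - x‖ ^ 2 := by
  refine norm_sub_sq_le_of_real_inner_nonneg
    (nonneg_of_mul_nonneg_right (a := 1 / r) ?_ (one_div_pos.2 hr))
  linarith [hres u hu, hf z hz u hu, hEP z hz]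

theorem norm_sub_smul_sub_sub_smul_sq_le {p q a b : H} {α lam : ℝ} (hlam : 0 ≤ lam)
    (hism : α * ‖a - b‖ ^ 2 ≤ ⟪a - b, p - q⟫) :
    ‖(p - lam • a) - (q - lam • b)‖ ^ 2 ≤ ‖p - q‖ ^ 2 - lam * (2 * α - lam) * ‖a - b‖ ^ 2 := by
  rw [show (p - lam • a) - (q - lam • b) = (p - q) - lam • (a - b) by module,
    norm_sub_sq_real, real_inner_smul_right, norm_smul, mul_pow, Real.norm_eq_abs, sq_abs,
    real_inner_comm]
  nlinarith

theorem norm_sub_convex_comb_le {u v w : H} {a : ℝ} (ha : a ∈ Set.Icc (0 : ℝ) 1)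
    (hw : ‖u - w‖ ≤ ‖u - v‖) : ‖u - (a • v + (1 - a) • w)‖ ≤ ‖u - v‖ := by
  have hmem := convex_closedBall u ‖u - v‖ (x := v) (y := w)
    (by simp [dist_eq_norm, norm_sub_rev]) (by simpa [dist_eq_norm, norm_sub_rev] using hw)
    ha.1 (sub_nonneg.2 ha.2) (add_sub_cancel a 1)
  simpa [dist_eq_norm, norm_sub_rev] using hmem

end

theorem key_quadratic_estimate_general
    {H : Type*} [NormedAddCommGroup H] [InnerProductSpace ℝ H]
    -- `C` is a nonempty closed convex subset of `H`
    (C : Set H) (hCcv : Convex ℝ C)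
    (K M N : ℕ)
    -- the bifunctions `f_l : C × C → ℝ` satisfy conditions (A1)-(A4)
    (f : Fin K → H → H → ℝ)
    (hfA2 : ∀ l, ∀ p ∈ C, ∀ q ∈ C, f l p q + f l q p ≤ 0)
    -- the mappings `A_k : C → H` are `α`-inverse strongly monotone
    (α : ℝ) (A : Fin M → H → H)
    (hA : ∀ k, ∀ p ∈ C, ∀ q ∈ C, α * ‖A k p - A k q‖ ^ 2 ≤ ⟪A k p - A k q, p - q⟫)
    -- the mappings `S_i : C → C` are nonexpansive
    (S : Fin N → H → H)
    (hS : ∀ i, ∀ p ∈ C, ∀ q ∈ C, ‖S i p - S i q‖ ≤ ‖p - q‖)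
    -- parameters: `λ ∈ (0, 2α)`, `{α_n} ⊂ [0,1]`, `{r_n} ⊂ [d, ∞)`, `d > 0`
    (lam : ℝ) (hlam : lam ∈ Set.Ioo 0 (2 * α))
    (a : ℕ → ℝ) (ha : ∀ n, a n ∈ Set.Icc (0 : ℝ) 1)
    (d : ℝ) (hd : 0 < d) (r : ℕ → ℝ) (hr : ∀ n, d ≤ r n)
    -- `F = (∩ EP(f_l)) ∩ (∩ F(S_i)) ∩ (∩ VI(A_k, C))` is nonempty
    (F : Set H)
    (hF : F = {p | p ∈ C ∧ (∀ l, ∀ q ∈ C, 0 ≤ f l p q) ∧ (∀ i, S i p = p) ∧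
      (∀ k, ∀ q ∈ C, 0 ≤ ⟪A k p, q - p⟫)})
    -- the parallel hybrid algorithm
    (x : ℕ → H) (z : ℕ → Fin K → H) (uu : ℕ → Fin M → H) (y : ℕ → Fin N → H)
    (ln : ℕ → Fin K) (kn : ℕ → Fin M)
    -- `z_n^l` solves the regularized equilibrium problem for `f_l` at `x_n`
    (hz : ∀ n l, z n l ∈ C ∧
      ∀ q ∈ C, 0 ≤ f l (z n l) q + (1 / r n) * ⟪q - z n l, z n l - x n⟫)
    -- `u_n^k = P_C(z̄_n - λ A_k z̄_n)`
    (hu : ∀ n k, IsMetricProj C (z n (ln n) - lam • A k (z n (ln n))) (uu n k))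
    -- `y_n^i = α_n ū_n + (1 - α_n) S_i ū_n`
    (hy : ∀ n i, y n i = a n • uu n (kn n) + (1 - a n) • S i (uu n (kn n)))
    :
    ∀ u ∈ F, ∀ n, ∀ i,
      ‖u - y n i‖ ^ 2 ≤ ‖u - uu n (kn n)‖ ^ 2 ∧
      ‖u - uu n (kn n)‖ ^ 2 ≤
        ‖u - x n‖ ^ 2 - lam * (2 * α - lam) * ‖A (kn n) (z n (ln n)) - A (kn n) u‖ ^ 2 := by
  intro u huF n i
  rw [hF] at huF
  obtain ⟨huC, huEP, huFix, huVI⟩ := huF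
  obtain ⟨hzC, hres⟩ := hz n (ln n)
  set zb := z n (ln n)
  set ub := uu n (kn n)
  have hSu : ‖u - S i ub‖ ≤ ‖u - ub‖ := by
    simpa only [huFix i] using hS i u huC ub (hu n (kn n)).1
  have hresolvent : ‖u - zb‖ ^ 2 ≤ ‖u - x n‖ ^ 2 :=
    norm_sub_resolvent_sq_le (hfA2 (ln n)) (hd.trans_le (hr n)) hzC hres huC (huEP (ln n))
  have hproj := (hu n (kn n)).norm_sub_le_s9 hCcv
    (isMetricProj_sub_smul_of_forall_inner_nonneg hCcv hlam.1.le huC (huVI (kn n)))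
  refine ⟨?_, ?_⟩
  · rw [hy n i]
    exact pow_le_pow_left₀ (norm_nonneg _) (norm_sub_convex_comb_le (ha n) hSu) 2
  · calc ‖u - ub‖ ^ 2 = ‖ub - u‖ ^ 2 := by rw [norm_sub_rev]
      _ ≤ ‖(zb - lam • A (kn n) zb) - (u - lam • A (kn n) u)‖ ^ 2 := by gcongr
      _ ≤ ‖zb - u‖ ^ 2 - lam * (2 * α - lam) * ‖A (kn n) zb - A (kn n) u‖ ^ 2 :=
        norm_sub_smul_sub_sub_smul_sq_le hlam.1.le (hA (kn n) zb hzC u huC)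
      _ ≤ _ := by rw [norm_sub_rev zb]; linarith

theorem key_quadratic_estimate
    {H : Type*} [NormedAddCommGroup H] [InnerProductSpace ℝ H] [CompleteSpace H]
    -- `C` is a nonempty closed convex subset of `H`
    (C : Set H) (hCne : C.Nonempty) (hCcl : IsClosed C) (hCcv : Convex ℝ C)
    (K M N : ℕ)
    -- the bifunctions `f_l : C × C → ℝ` satisfy conditions (A1)-(A4)
    (f : Fin K → H → H → ℝ)
    (hfA1 : ∀ l, ∀ p ∈ C, f l p p = 0)
    (hfA2 : ∀ l, ∀ p ∈ C, ∀ q ∈ C, f l p q + f l q p ≤ 0)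
    (hfA3 : ∀ l, ∀ p ∈ C, ∀ q ∈ C, ∀ w ∈ C,
      Filter.limsup (fun t : ℝ => f l (t • w + (1 - t) • p) q)
        (nhdsWithin 0 (Set.Ioi 0)) ≤ f l p q)
    (hfA4cv : ∀ l, ∀ p ∈ C, ConvexOn ℝ C (f l p))
    (hfA4lsc : ∀ l, ∀ p ∈ C, LowerSemicontinuousOn (f l p) C)
    -- the mappings `A_k : C → H` are `α`-inverse strongly monotone
    (α : ℝ) (hα : 0 < α) (A : Fin M → H → H)
    (hA : ∀ k, ∀ p ∈ C, ∀ q ∈ C, α * ‖A k p - A k q‖ ^ 2 ≤ ⟪A k p - A k q, p - q⟫)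
    -- the mappings `S_i : C → C` are nonexpansive
    (S : Fin N → H → H) (hSmap : ∀ i, ∀ p ∈ C, S i p ∈ C)
    (hS : ∀ i, ∀ p ∈ C, ∀ q ∈ C, ‖S i p - S i q‖ ≤ ‖p - q‖)
    -- parameters: `λ ∈ (0, 2α)`, `{α_n} ⊂ [0,1]`, `{r_n} ⊂ [d, ∞)`, `d > 0`
    (lam : ℝ) (hlam : lam ∈ Set.Ioo 0 (2 * α))
    (a : ℕ → ℝ) (ha : ∀ n, a n ∈ Set.Icc (0 : ℝ) 1)
    (d : ℝ) (hd : 0 < d) (r : ℕ → ℝ) (hr : ∀ n, d ≤ r n)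
    -- `F = (∩ EP(f_l)) ∩ (∩ F(S_i)) ∩ (∩ VI(A_k, C))` is nonempty
    (F : Set H)
    (hF : F = {p | p ∈ C ∧ (∀ l, ∀ q ∈ C, 0 ≤ f l p q) ∧ (∀ i, S i p = p) ∧
      (∀ k, ∀ q ∈ C, 0 ≤ ⟪A k p, q - p⟫)})
    (hFne : F.Nonempty)
    -- the parallel hybrid algorithm
    (x : ℕ → H) (z : ℕ → Fin K → H) (uu : ℕ → Fin M → H) (y : ℕ → Fin N → H)
    (ln : ℕ → Fin K) (kn : ℕ → Fin M) (inn : ℕ → Fin N)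
    (Cn Qn : ℕ → Set H)
    -- `z_n^l` solves the regularized equilibrium problem for `f_l` at `x_n`
    (hz : ∀ n l, z n l ∈ C ∧
      ∀ q ∈ C, 0 ≤ f l (z n l) q + (1 / r n) * ⟪q - z n l, z n l - x n⟫)
    -- `l_n` attains `max{‖z_n^l - x_n‖}`, `z̄_n = z_n^{l_n}`
    (hln : ∀ n l, ‖z n l - x n‖ ≤ ‖z n (ln n) - x n‖)
    -- `u_n^k = P_C(z̄_n - λ A_k z̄_n)`
    (hu : ∀ n k, IsMetricProj C (z n (ln n) - lam • A k (z n (ln n))) (uu n k))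
    -- `k_n` attains `max{‖u_n^k - x_n‖}`, `ū_n = u_n^{k_n}`
    (hkn : ∀ n k, ‖uu n k - x n‖ ≤ ‖uu n (kn n) - x n‖)
    -- `y_n^i = α_n ū_n + (1 - α_n) S_i ū_n`
    (hy : ∀ n i, y n i = a n • uu n (kn n) + (1 - a n) • S i (uu n (kn n)))
    -- `i_n` attains `max{‖y_n^i - x_n‖}`, `ȳ_n = y_n^{i_n}`
    (hin : ∀ n i, ‖y n i - x n‖ ≤ ‖y n (inn n) - x n‖)
    -- `C_n = {v : ‖v - ȳ_n‖ ≤ ‖v - z̄_n‖ ≤ ‖v - x_n‖}`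
    (hCn : ∀ n, Cn n = {v | ‖v - y n (inn n)‖ ≤ ‖v - z n (ln n)‖ ∧
      ‖v - z n (ln n)‖ ≤ ‖v - x n‖})
    -- `Q_n = {v : ⟨x_0 - x_n, x_n - v⟩ ≥ 0}`
    (hQn : ∀ n, Qn n = {v | 0 ≤ ⟪x 0 - x n, x n - v⟫})
    -- `x_{n+1} = P_{C_n ∩ Q_n} x_0`
    (hx : ∀ n, IsMetricProj (Cn n ∩ Qn n) (x 0) (x (n + 1)))
    :
    ∀ u ∈ F, ∀ n, ∀ i,
      ‖u - y n i‖ ^ 2 ≤ ‖u - uu n (kn n)‖ ^ 2 ∧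
      ‖u - uu n (kn n)‖ ^ 2 ≤
        ‖u - x n‖ ^ 2 - lam * (2 * α - lam) * ‖A (kn n) (z n (ln n)) - A (kn n) u‖ ^ 2 :=
  key_quadratic_estimate_general C hCcv K M N f hfA2 α A hA S hS lam hlam a ha d hd r hr F hF x z uu
    y ln kn hz hu hy
end

section
/- Under the stated hypotheses, for the parallel hybrid algorithm one has lim_{n→∞} ‖z̄_n - ū_n‖ = 0 and consequently lim_{n→∞} ‖x_n - ū_n‖ = 0. -/
open Filter Topology
open scoped RealInnerProductSpace

lemma tendsto_zero_of_sq {u : ℕ → ℝ} (hu : ∀ n, 0 ≤ u n)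
    (h : Filter.Tendsto (fun n => u n ^ 2) Filter.atTop (nhds 0)) :
    Filter.Tendsto u Filter.atTop (nhds 0) := by
  have h2 := (Real.continuous_sqrt.tendsto 0).comp h
  have e : (fun n => Real.sqrt (u n ^ 2)) = u := funext fun n => Real.sqrt_sq (hu n)
  rw [Function.comp_def, e] at h2
  simpa using h2

lemma convex_norm_le_set {H : Type*} [NormedAddCommGroup H] [InnerProductSpace ℝ H]
    (q1 q2 : H) : Convex ℝ {v : H | ‖v - q1‖ ≤ ‖v - q2‖} := by
  have hiff : ∀ v : H, ‖v - q1‖ ≤ ‖v - q2‖ ↔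
      2 * (⟪v, q2⟫ - ⟪v, q1⟫) ≤ ‖q2‖ ^ 2 - ‖q1‖ ^ 2 := by
    intro v
    constructor
    · intro hle
      have h2 : ‖v - q1‖ ^ 2 ≤ ‖v - q2‖ ^ 2 := by nlinarith [norm_nonneg (v - q1)]
      rw [norm_sub_sq_real, norm_sub_sq_real] at h2
      linarith
    · intro hle
      have h2 : ‖v - q1‖ ^ 2 ≤ ‖v - q2‖ ^ 2 := by
        rw [norm_sub_sq_real, norm_sub_sq_real]; linarith
      nlinarith [norm_nonneg (v - q1), norm_nonneg (v - q2)]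
  intro v1 h1 v2 h2 s t hs ht hst
  simp only [Set.mem_setOf_eq, hiff] at h1 h2 ⊢
  simp only [inner_add_left, real_inner_smul_left]
  nlinarith [mul_le_mul_of_nonneg_left h1 hs, mul_le_mul_of_nonneg_left h2 ht]

lemma convex_inner_set {H : Type*} [NormedAddCommGroup H] [InnerProductSpace ℝ H]
    (w u : H) : Convex ℝ {v : H | 0 ≤ ⟪w, u - v⟫} := by
  intro v1 h1 v2 h2 s t hs ht hst
  simp only [Set.mem_setOf_eq, inner_sub_right] at h1 h2 ⊢
  simp only [inner_add_right, real_inner_smul_right]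
  have h3 : s * ⟪w, u⟫ + t * ⟪w, u⟫ = ⟪w, u⟫ := by rw [← add_mul, hst, one_mul]
  nlinarith [mul_le_mul_of_nonneg_left h1 hs, mul_le_mul_of_nonneg_left h2 ht]

lemma isMetricProj_inner_le {H : Type*} [NormedAddCommGroup H] [InnerProductSpace ℝ H]
    {D : Set H} (hD : Convex ℝ D) {x p : H} (h : IsMetricProj D x p) :
    ∀ w ∈ D, ⟪x - p, w - p⟫ ≤ 0 := by
  intro w hw
  by_contra hcon
  push_neg at hcon
  have hwp : w - p ≠ 0 := by
    intro h0
    rw [h0, inner_zero_right] at hcon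
    exact lt_irrefl _ hcon
  have hnorm : 0 < ‖w - p‖ ^ 2 := by
    have := norm_pos_iff.mpr hwp
    positivity
  set c : ℝ := ⟪x - p, w - p⟫ with hc
  set t : ℝ := min 1 (c / ‖w - p‖ ^ 2) with ht
  have ht0 : 0 < t := lt_min one_pos (div_pos hcon hnorm)
  have ht1 : t ≤ 1 := min_le_left _ _
  have hmem : p + t • (w - p) ∈ D := by
    have := hD h.1 hw (by linarith : (0:ℝ) ≤ 1 - t) ht0.le (by ring)
    convert this using 1
    module
  have hle := h.2 _ hmem
  have hsq : ‖p - x‖ ^ 2 ≤ ‖p + t • (w - p) - x‖ ^ 2 := by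
    have h2 := (h.2 _ hmem)
    nlinarith [norm_nonneg (p - x)]
  have hexp : ‖p + t • (w - p) - x‖ ^ 2 = ‖p - x‖ ^ 2 - 2 * t * c + t ^ 2 * ‖w - p‖ ^ 2 := by
    have e : p + t • (w - p) - x = (p - x) + t • (w - p) := by module
    rw [e, norm_add_sq_real, real_inner_smul_right]
    have e2 : ⟪p - x, w - p⟫ = -c := by
      rw [hc, show p - x = -(x - p) by abel, inner_neg_left]
    rw [e2, norm_smul]
    simp [mul_pow, sq_abs]
    ring
  have htc : t * ‖w - p‖ ^ 2 ≤ c := by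
    calc t * ‖w - p‖ ^ 2 ≤ (c / ‖w - p‖ ^ 2) * ‖w - p‖ ^ 2 := by
          exact mul_le_mul_of_nonneg_right (min_le_right _ _) hnorm.le
      _ = c := div_mul_cancel₀ _ hnorm.ne'
  nlinarith [mul_le_mul_of_nonneg_left htc ht0.le]

lemma proj_step {H : Type*} [NormedAddCommGroup H] [InnerProductSpace ℝ H]
    {p Zn Un an bn : H} {lam α : ℝ}
    (hlam0 : 0 < lam) (hlam2 : lam < 2 * α)
    (hmono : α * ‖an - bn‖ ^ 2 ≤ ⟪an - bn, Zn - p⟫)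
    (hVI : 0 ≤ ⟪bn, Un - p⟫)
    (hchar : ⟪(Zn - lam • an) - Un, p - Un⟫ ≤ 0) :
    ‖Un - p‖ ^ 2 ≤ ‖Zn - p‖ ^ 2 - lam * (2 * α - lam) * ‖an - bn‖ ^ 2 ∧
    ‖Zn - Un‖ ^ 2 ≤ ‖Zn - p‖ ^ 2 - ‖Un - p‖ ^ 2 + 2 * lam * (‖an - bn‖ * ‖Un - p‖) := by
  -- I1 : ‖Un-p‖² + lam*⟪an, Un-p⟫ ≤ ⟪Zn-p, Un-p⟫
  have I1 : ‖Un - p‖ ^ 2 + lam * ⟪an, Un - p⟫ ≤ ⟪Zn - p, Un - p⟫ := by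
    have e1 : (Zn - lam • an) - Un = ((Zn - p) - (Un - p)) - lam • an := by module
    have e2 : p - Un = -(Un - p) := by abel
    rw [e1, e2, inner_neg_right, inner_sub_left, inner_sub_left, real_inner_smul_left,
      real_inner_self_eq_norm_sq] at hchar
    linarith
  have esplit : ⟪an, Un - p⟫ = ⟪an - bn, Un - p⟫ + ⟪bn, Un - p⟫ := by
    rw [inner_sub_left]; ring
  have hcs : |⟪an - bn, Un - p⟫| ≤ ‖an - bn‖ * ‖Un - p‖ := abs_real_inner_le_norm _ _
  have hcs1 : -(‖an - bn‖ * ‖Un - p‖) ≤ ⟪an - bn, Un - p⟫ := neg_le_of_neg_le (by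
    have := neg_abs_le ⟪an - bn, Un - p⟫; linarith)
  -- part 1
  have hc2 : ‖(Zn - p) - lam • (an - bn)‖ ^ 2
      = ‖Zn - p‖ ^ 2 - 2 * lam * ⟪an - bn, Zn - p⟫ + lam ^ 2 * ‖an - bn‖ ^ 2 := by
    rw [norm_sub_sq_real, real_inner_smul_right, norm_smul]
    rw [real_inner_comm]
    simp [mul_pow, sq_abs]
    ring
  have hinner : ⟪(Zn - p) - lam • (an - bn), Un - p⟫
      = ⟪Zn - p, Un - p⟫ - lam * ⟪an - bn, Un - p⟫ := by
    rw [inner_sub_left, real_inner_smul_left]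
  have hup2 : ‖Un - p‖ ^ 2 ≤ ⟪(Zn - p) - lam • (an - bn), Un - p⟫ := by
    rw [hinner]
    nlinarith [mul_le_mul_of_nonneg_left hVI hlam0.le]
  have hle : ‖Un - p‖ ^ 2 ≤ ‖(Zn - p) - lam • (an - bn)‖ * ‖Un - p‖ :=
    le_trans hup2 (real_inner_le_norm _ _)
  have hnorm_le : ‖Un - p‖ ≤ ‖(Zn - p) - lam • (an - bn)‖ := by
    rcases eq_or_lt_of_le (norm_nonneg (Un - p)) with h0 | h0
    · rw [← h0]; exact norm_nonneg _
    · nlinarith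
  have part1 : ‖Un - p‖ ^ 2 ≤ ‖Zn - p‖ ^ 2 - lam * (2 * α - lam) * ‖an - bn‖ ^ 2 := by
    have hsq : ‖Un - p‖ ^ 2 ≤ ‖(Zn - p) - lam • (an - bn)‖ ^ 2 := by
      nlinarith [norm_nonneg (Un - p)]
    rw [hc2] at hsq
    nlinarith [mul_le_mul_of_nonneg_left hmono (by linarith : (0:ℝ) ≤ 2 * lam)]
  refine ⟨part1, ?_⟩
  -- part 2
  have hzu : ‖Zn - Un‖ ^ 2 = ‖Zn - p‖ ^ 2 - 2 * ⟪Zn - p, Un - p⟫ + ‖Un - p‖ ^ 2 := by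
    have e : Zn - Un = (Zn - p) - (Un - p) := by abel
    rw [e, norm_sub_sq_real]
  rw [hzu]
  nlinarith [mul_le_mul_of_nonneg_left hcs1 hlam0.le,
    mul_le_mul_of_nonneg_left hVI hlam0.le]

theorem zbar_ubar_gap_vanishes
    {H : Type*} [NormedAddCommGroup H] [InnerProductSpace ℝ H] [CompleteSpace H]
    -- `C` is a nonempty closed convex subset of `H`
    (C : Set H) (hCne : C.Nonempty) (hCcl : IsClosed C) (hCcv : Convex ℝ C)
    (K M N : ℕ)
    -- the bifunctions `f_l : C × C → ℝ` satisfy conditions (A1)-(A4)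
    (f : Fin K → H → H → ℝ)
    (hfA1 : ∀ l, ∀ p ∈ C, f l p p = 0)
    (hfA2 : ∀ l, ∀ p ∈ C, ∀ q ∈ C, f l p q + f l q p ≤ 0)
    (hfA3 : ∀ l, ∀ p ∈ C, ∀ q ∈ C, ∀ w ∈ C,
      Filter.limsup (fun t : ℝ => f l (t • w + (1 - t) • p) q)
        (nhdsWithin 0 (Set.Ioi 0)) ≤ f l p q)
    (hfA4cv : ∀ l, ∀ p ∈ C, ConvexOn ℝ C (f l p))
    (hfA4lsc : ∀ l, ∀ p ∈ C, LowerSemicontinuousOn (f l p) C)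
    -- the mappings `A_k : C → H` are `α`-inverse strongly monotone
    (α : ℝ) (hα : 0 < α) (A : Fin M → H → H)
    (hA : ∀ k, ∀ p ∈ C, ∀ q ∈ C, α * ‖A k p - A k q‖ ^ 2 ≤ ⟪A k p - A k q, p - q⟫)
    -- the mappings `S_i : C → C` are nonexpansive
    (S : Fin N → H → H) (hSmap : ∀ i, ∀ p ∈ C, S i p ∈ C)
    (hS : ∀ i, ∀ p ∈ C, ∀ q ∈ C, ‖S i p - S i q‖ ≤ ‖p - q‖)
    -- parameters: `λ ∈ (0, 2α)`, `{α_n} ⊂ [0,1]`, `{r_n} ⊂ [d, ∞)`, `d > 0`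
    (lam : ℝ) (hlam : lam ∈ Set.Ioo 0 (2 * α))
    (a : ℕ → ℝ) (ha : ∀ n, a n ∈ Set.Icc (0 : ℝ) 1)
    (ha' : Filter.limsup a Filter.atTop < 1)
    (d : ℝ) (hd : 0 < d) (r : ℕ → ℝ) (hr : ∀ n, d ≤ r n)
    -- `F = (∩ EP(f_l)) ∩ (∩ F(S_i)) ∩ (∩ VI(A_k, C))` is nonempty
    (F : Set H)
    (hF : F = {p | p ∈ C ∧ (∀ l, ∀ q ∈ C, 0 ≤ f l p q) ∧ (∀ i, S i p = p) ∧
      (∀ k, ∀ q ∈ C, 0 ≤ ⟪A k p, q - p⟫)})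
    (hFne : F.Nonempty)
    -- the parallel hybrid algorithm
    (x : ℕ → H) (z : ℕ → Fin K → H) (uu : ℕ → Fin M → H) (y : ℕ → Fin N → H)
    (ln : ℕ → Fin K) (kn : ℕ → Fin M) (inn : ℕ → Fin N)
    (Cn Qn : ℕ → Set H)
    -- `z_n^l` solves the regularized equilibrium problem for `f_l` at `x_n`
    (hz : ∀ n l, z n l ∈ C ∧
      ∀ q ∈ C, 0 ≤ f l (z n l) q + (1 / r n) * ⟪q - z n l, z n l - x n⟫)
    -- `l_n` attains `max{‖z_n^l - x_n‖}`, `z̄_n = z_n^{l_n}`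
    (hln : ∀ n l, ‖z n l - x n‖ ≤ ‖z n (ln n) - x n‖)
    -- `u_n^k = P_C(z̄_n - λ A_k z̄_n)`
    (hu : ∀ n k, IsMetricProj C (z n (ln n) - lam • A k (z n (ln n))) (uu n k))
    -- `k_n` attains `max{‖u_n^k - x_n‖}`, `ū_n = u_n^{k_n}`
    (hkn : ∀ n k, ‖uu n k - x n‖ ≤ ‖uu n (kn n) - x n‖)
    -- `y_n^i = α_n ū_n + (1 - α_n) S_i ū_n`
    (hy : ∀ n i, y n i = a n • uu n (kn n) + (1 - a n) • S i (uu n (kn n)))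
    -- `i_n` attains `max{‖y_n^i - x_n‖}`, `ȳ_n = y_n^{i_n}`
    (hin : ∀ n i, ‖y n i - x n‖ ≤ ‖y n (inn n) - x n‖)
    -- `C_n = {v : ‖v - ȳ_n‖ ≤ ‖v - z̄_n‖ ≤ ‖v - x_n‖}`
    (hCn : ∀ n, Cn n = {v | ‖v - y n (inn n)‖ ≤ ‖v - z n (ln n)‖ ∧
      ‖v - z n (ln n)‖ ≤ ‖v - x n‖})
    -- `Q_n = {v : ⟨x_0 - x_n, x_n - v⟩ ≥ 0}`
    (hQn : ∀ n, Qn n = {v | 0 ≤ ⟪x 0 - x n, x n - v⟫})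
    -- `x_{n+1} = P_{C_n ∩ Q_n} x_0`
    (hx : ∀ n, IsMetricProj (Cn n ∩ Qn n) (x 0) (x (n + 1)))
    :
    Filter.Tendsto (fun n => ‖z n (ln n) - uu n (kn n)‖) Filter.atTop (nhds 0) ∧
    Filter.Tendsto (fun n => ‖x n - uu n (kn n)‖) Filter.atTop (nhds 0) := by
    classical
  obtain ⟨p, hpF⟩ := hFne
  rw [hF] at hpF
  obtain ⟨hpC, hpf, hpS, hpA⟩ := hpF
  have hZC : ∀ n, z n (ln n) ∈ C := fun n => (hz n (ln n)).1
  have hUC : ∀ n, uu n (kn n) ∈ C := fun n => (hu n (kn n)).1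
  -- Step 1 : ‖z̄ₙ - p‖ ≤ ‖xₙ - p‖
  have step1 : ∀ n, ‖z n (ln n) - p‖ ≤ ‖x n - p‖ := by
    intro n
    have hzn := hz n (ln n)
    have hq := hzn.2 p hpC
    have hf1 : f (ln n) (z n (ln n)) p ≤ 0 := by
      have h2 := hfA2 (ln n) (z n (ln n)) hzn.1 p hpC
      have h3 := hpf (ln n) (z n (ln n)) hzn.1
      linarith
    have hrpos : 0 < r n := lt_of_lt_of_le hd (hr n)
    have hip : 0 ≤ ⟪p - z n (ln n), z n (ln n) - x n⟫ := by
      by_contra hcon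
      push_neg at hcon
      have : (1 / r n) * ⟪p - z n (ln n), z n (ln n) - x n⟫ < 0 :=
        mul_neg_of_pos_of_neg (by positivity) hcon
      linarith
    have key : ‖z n (ln n) - p‖ ^ 2 ≤ ⟪z n (ln n) - p, x n - p⟫ := by
      have e : ⟪z n (ln n) - p, x n - p⟫
          = ‖z n (ln n) - p‖ ^ 2 + ⟪p - z n (ln n), z n (ln n) - x n⟫ := by
        have e2 : x n - p = (x n - z n (ln n)) + (z n (ln n) - p) := by abel
        rw [e2, inner_add_right, real_inner_self_eq_norm_sq]
        have e3 : ⟪z n (ln n) - p, x n - z n (ln n)⟫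
            = ⟪p - z n (ln n), z n (ln n) - x n⟫ := by
          rw [show p - z n (ln n) = -(z n (ln n) - p) by abel,
            show z n (ln n) - x n = -(x n - z n (ln n)) by abel, inner_neg_neg]
        rw [e3]; ring
      rw [e]; linarith
    have hcs := real_inner_le_norm (z n (ln n) - p) (x n - p)
    nlinarith [norm_nonneg (z n (ln n) - p), norm_nonneg (x n - p)]
  -- Step 2 : the two projection inequalities
  have step2 : ∀ n,
      ‖uu n (kn n) - p‖ ^ 2 ≤ ‖z n (ln n) - p‖ ^ 2
          - lam * (2 * α - lam) * ‖A (kn n) (z n (ln n)) - A (kn n) p‖ ^ 2 ∧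
      ‖z n (ln n) - uu n (kn n)‖ ^ 2 ≤ ‖z n (ln n) - p‖ ^ 2 - ‖uu n (kn n) - p‖ ^ 2
          + 2 * lam * (‖A (kn n) (z n (ln n)) - A (kn n) p‖ * ‖uu n (kn n) - p‖) := by
    intro n
    exact proj_step hlam.1 hlam.2
      (hA (kn n) (z n (ln n)) (hZC n) p hpC)
      (hpA (kn n) (uu n (kn n)) (hUC n))
      (isMetricProj_inner_le hCcv (hu n (kn n)) p hpC)
  have hc0 : 0 < lam * (2 * α - lam) := mul_pos hlam.1 (by linarith [hlam.2])
  have hUp_le : ∀ n, ‖uu n (kn n) - p‖ ≤ ‖z n (ln n) - p‖ := by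
    intro n
    have h := (step2 n).1
    nlinarith [norm_nonneg (uu n (kn n) - p), norm_nonneg (z n (ln n) - p),
      sq_nonneg ‖A (kn n) (z n (ln n)) - A (kn n) p‖, hc0,
      mul_nonneg hc0.le (sq_nonneg ‖A (kn n) (z n (ln n)) - A (kn n) p‖)]
  -- Step 3 : ‖ȳₙ - p‖ ≤ ‖ūₙ - p‖
  have step3 : ∀ n, ‖y n (inn n) - p‖ ≤ ‖uu n (kn n) - p‖ := by
    intro n
    have hy1 := hy n (inn n)
    have e : y n (inn n) - p
        = a n • (uu n (kn n) - p) + (1 - a n) • (S (inn n) (uu n (kn n)) - p) := by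
      have e1 : a n • (uu n (kn n) - p) + (1 - a n) • (S (inn n) (uu n (kn n)) - p)
          = a n • uu n (kn n) + (1 - a n) • S (inn n) (uu n (kn n))
            - (a n + (1 - a n)) • p := by module
      rw [hy1, e1, show a n + (1 - a n) = (1:ℝ) by ring, one_smul]
    have hS' := hS (inn n) (uu n (kn n)) (hUC n) p hpC
    rw [hpS (inn n)] at hS'
    calc ‖y n (inn n) - p‖
        = ‖a n • (uu n (kn n) - p) + (1 - a n) • (S (inn n) (uu n (kn n)) - p)‖ := by rw [e]
      _ ≤ ‖a n • (uu n (kn n) - p)‖ + ‖(1 - a n) • (S (inn n) (uu n (kn n)) - p)‖ :=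
          norm_add_le _ _
      _ = a n * ‖uu n (kn n) - p‖ + (1 - a n) * ‖S (inn n) (uu n (kn n)) - p‖ := by
          rw [norm_smul, norm_smul, Real.norm_eq_abs, Real.norm_eq_abs,
            abs_of_nonneg (ha n).1, abs_of_nonneg (by linarith [(ha n).2])]
      _ ≤ a n * ‖uu n (kn n) - p‖ + (1 - a n) * ‖uu n (kn n) - p‖ := by
          have h1 : (0:ℝ) ≤ 1 - a n := by linarith [(ha n).2]
          nlinarith
      _ = ‖uu n (kn n) - p‖ := by ring
  -- p ∈ Cₙ
  have hpCn : ∀ n, p ∈ Cn n := by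
    intro n
    rw [hCn n]
    refine ⟨?_, ?_⟩
    · rw [norm_sub_rev p, norm_sub_rev p (z n (ln n))]
      exact le_trans (step3 n) (hUp_le n)
    · rw [norm_sub_rev p, norm_sub_rev p (x n)]
      exact step1 n
  -- convexity of Cₙ ∩ Qₙ
  have hconv : ∀ n, Convex ℝ (Cn n ∩ Qn n) := by
    intro n
    apply Convex.inter
    · rw [hCn n, Set.setOf_and]
      exact (convex_norm_le_set _ _).inter (convex_norm_le_set _ _)
    · rw [hQn n]
      exact convex_inner_set _ _
  -- p ∈ Qₙ, by induction
  have hpQn : ∀ n, p ∈ Qn n := by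
    intro n
    induction n with
    | zero => rw [hQn 0]; simp
    | succ n ih =>
      have hch := isMetricProj_inner_le (hconv n) (hx n) p ⟨hpCn n, ih⟩
      rw [hQn (n+1)]
      have e : ⟪x 0 - x (n+1), x (n+1) - p⟫ = -⟪x 0 - x (n+1), p - x (n+1)⟫ := by
        rw [show x (n+1) - p = -(p - x (n+1)) by abel, inner_neg_right]
      show 0 ≤ ⟪x 0 - x (n+1), x (n+1) - p⟫
      rw [e]; linarith
  -- the quantitative Qₙ inequality
  have hQineq : ∀ n, ∀ v : H, 0 ≤ ⟪x 0 - x n, x n - v⟫ →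
      ‖x n - x 0‖ ^ 2 + ‖v - x n‖ ^ 2 ≤ ‖v - x 0‖ ^ 2 := by
    intro n v hv
    have e : v - x 0 = (v - x n) + (x n - x 0) := by abel
    rw [e, norm_add_sq_real]
    have e2 : ⟪v - x n, x n - x 0⟫ = ⟪x 0 - x n, x n - v⟫ := by
      rw [show v - x n = -(x n - v) by abel, show x n - x 0 = -(x 0 - x n) by abel,
        inner_neg_neg, real_inner_comm]
    rw [e2]; linarith
  have hstepg : ∀ n, ‖x n - x 0‖ ^ 2 + ‖x (n+1) - x n‖ ^ 2 ≤ ‖x (n+1) - x 0‖ ^ 2 := by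
    intro n
    have hv := ((hx n).1).2
    rw [hQn n] at hv
    exact hQineq n (x (n+1)) hv
  have hbdd : ∀ n, ‖x n - x 0‖ ^ 2 ≤ ‖p - x 0‖ ^ 2 := by
    intro n
    have hv := hpQn n
    rw [hQn n] at hv
    have := hQineq n p hv
    nlinarith [sq_nonneg ‖p - x n‖]
  have hmono : Monotone (fun n => ‖x n - x 0‖ ^ 2) :=
    monotone_nat_of_le_succ (fun n => by nlinarith [hstepg n, sq_nonneg ‖x (n+1) - x n‖])
  have hbd : BddAbove (Set.range (fun n => ‖x n - x 0‖ ^ 2)) :=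
    ⟨‖p - x 0‖ ^ 2, by rintro y ⟨n, rfl⟩; exact hbdd n⟩
  have hconvg : Filter.Tendsto (fun n => ‖x n - x 0‖ ^ 2) Filter.atTop
      (nhds (⨆ n, ‖x n - x 0‖ ^ 2)) := tendsto_atTop_ciSup hmono hbd
  have hdiff : Filter.Tendsto (fun n => ‖x (n+1) - x n‖ ^ 2) Filter.atTop (nhds 0) := by
    have h1 : Filter.Tendsto (fun n => ‖x (n+1) - x 0‖ ^ 2 - ‖x n - x 0‖ ^ 2)
        Filter.atTop (nhds 0) := by
      have h2 := (hconvg.comp (Filter.tendsto_add_atTop_nat 1)).sub hconvg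
      simpa using h2
    exact squeeze_zero (fun n => sq_nonneg _) (fun n => by linarith [hstepg n]) h1
  have hxx : Filter.Tendsto (fun n => ‖x (n+1) - x n‖) Filter.atTop (nhds 0) :=
    tendsto_zero_of_sq (fun n => norm_nonneg _) hdiff
  -- xₙ₊₁ ∈ Cₙ consequences
  have hxCmem : ∀ n, ‖x (n+1) - y n (inn n)‖ ≤ ‖x (n+1) - x n‖ ∧
      ‖x (n+1) - z n (ln n)‖ ≤ ‖x (n+1) - x n‖ := by
    intro n
    have hv := ((hx n).1).1
    rw [hCn n] at hv
    exact ⟨le_trans hv.1 hv.2, hv.2⟩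
  have htri : ∀ (u v : H) (n : ℕ), ‖x n - v‖ ≤ ‖x n - x (n+1)‖ + ‖x (n+1) - v‖ := by
    intro u v n
    have := dist_triangle (x n) (x (n+1)) v
    simpa [dist_eq_norm] using this
  have hxz : Filter.Tendsto (fun n => ‖x n - z n (ln n)‖) Filter.atTop (nhds 0) := by
    refine squeeze_zero (fun n => norm_nonneg _) (fun n => ?_)
      (by simpa using hxx.const_mul 2)
    have h1 := htri (x n) (z n (ln n)) n
    have h2 := (hxCmem n).2
    rw [norm_sub_rev (x n) (x (n+1))] at h1
    linarith
  have hxy : Filter.Tendsto (fun n => ‖x n - y n (inn n)‖) Filter.atTop (nhds 0) := by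
    refine squeeze_zero (fun n => norm_nonneg _) (fun n => ?_)
      (by simpa using hxx.const_mul 2)
    have h1 := htri (x n) (y n (inn n)) n
    have h2 := (hxCmem n).1
    rw [norm_sub_rev (x n) (x (n+1))] at h1
    linarith
  -- boundedness
  have hPx : ∀ n, ‖x n - p‖ ≤ 2 * ‖p - x 0‖ := by
    intro n
    have h1 : ‖x n - x 0‖ ≤ ‖p - x 0‖ := by
      nlinarith [hbdd n, norm_nonneg (x n - x 0), norm_nonneg (p - x 0)]
    have h2 : ‖x n - p‖ ≤ ‖x n - x 0‖ + ‖x 0 - p‖ := by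
      have := dist_triangle (x n) (x 0) p
      simpa [dist_eq_norm] using this
    rw [norm_sub_rev (x 0) p] at h2
    linarith
  have hPZ : ∀ n, ‖z n (ln n) - p‖ ≤ 2 * ‖p - x 0‖ := fun n => le_trans (step1 n) (hPx n)
  have hPU : ∀ n, ‖uu n (kn n) - p‖ ≤ 2 * ‖p - x 0‖ := fun n => le_trans (hUp_le n) (hPZ n)
  have hPY : ∀ n, ‖y n (inn n) - p‖ ≤ 2 * ‖p - x 0‖ := fun n => le_trans (step3 n) (hPU n)
  -- the vanishing upper bound
  have hchain : ∀ n, ‖z n (ln n) - p‖ ^ 2 - ‖uu n (kn n) - p‖ ^ 2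
      ≤ 8 * ‖p - x 0‖ * ‖x n - y n (inn n)‖ := by
    intro n
    have htr1 : ‖x n - p‖ ≤ ‖x n - y n (inn n)‖ + ‖y n (inn n) - p‖ := by
      have := dist_triangle (x n) (y n (inn n)) p
      simpa [dist_eq_norm] using this
    have htr2 : ‖x n - y n (inn n)‖ ≤ 4 * ‖p - x 0‖ := by
      have h3 : ‖x n - y n (inn n)‖ ≤ ‖x n - p‖ + ‖p - y n (inn n)‖ := by
        have := dist_triangle (x n) p (y n (inn n))
        simpa [dist_eq_norm] using this
      rw [norm_sub_rev p] at h3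
      linarith [hPx n, hPY n]
    have heps : ‖x n - p‖ ^ 2 - ‖y n (inn n) - p‖ ^ 2
        ≤ 8 * ‖p - x 0‖ * ‖x n - y n (inn n)‖ := by
      have hp1 := mul_le_mul_of_nonneg_left htr2 (norm_nonneg (x n - y n (inn n)))
      have hp2 := mul_le_mul_of_nonneg_left (hPY n) (norm_nonneg (x n - y n (inn n)))
      have hsq := pow_le_pow_left₀ (norm_nonneg (x n - p)) htr1 2
      nlinarith [hp1, hp2, hsq]
    have hsq1 : ‖z n (ln n) - p‖ ^ 2 ≤ ‖x n - p‖ ^ 2 := by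
      nlinarith [step1 n, norm_nonneg (z n (ln n) - p), norm_nonneg (x n - p)]
    have hsq2 : ‖y n (inn n) - p‖ ^ 2 ≤ ‖uu n (kn n) - p‖ ^ 2 := by
      nlinarith [step3 n, norm_nonneg (y n (inn n) - p), norm_nonneg (uu n (kn n) - p)]
    linarith
  have he0 : Filter.Tendsto (fun n => 8 * ‖p - x 0‖ * ‖x n - y n (inn n)‖)
      Filter.atTop (nhds 0) := by simpa using hxy.const_mul (8 * ‖p - x 0‖)
  -- ‖A z̄ₙ - A p‖ → 0
  have hab2 : Filter.Tendsto (fun n => ‖A (kn n) (z n (ln n)) - A (kn n) p‖ ^ 2)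
      Filter.atTop (nhds 0) := by
    have h3 : Filter.Tendsto
        (fun n => (lam * (2 * α - lam))⁻¹ * (8 * ‖p - x 0‖ * ‖x n - y n (inn n)‖))
        Filter.atTop (nhds 0) := by
      have h4 := he0.const_mul (lam * (2 * α - lam))⁻¹
      rwa [mul_zero] at h4
    refine squeeze_zero (fun n => sq_nonneg _) (fun n => ?_) h3
    have h1 := (step2 n).1
    have h2 := hchain n
    rw [inv_mul_eq_div, le_div_iff₀ hc0]
    nlinarith
  have hab : Filter.Tendsto (fun n => ‖A (kn n) (z n (ln n)) - A (kn n) p‖)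
      Filter.atTop (nhds 0) := tendsto_zero_of_sq (fun n => norm_nonneg _) hab2
  -- first conclusion
  have hzu2 : Filter.Tendsto (fun n => ‖z n (ln n) - uu n (kn n)‖ ^ 2)
      Filter.atTop (nhds 0) := by
    have hBt : Filter.Tendsto (fun n => 8 * ‖p - x 0‖ * ‖x n - y n (inn n)‖
          + (4 * lam * ‖p - x 0‖) * ‖A (kn n) (z n (ln n)) - A (kn n) p‖)
        Filter.atTop (nhds 0) := by
      have h5 := he0.add (hab.const_mul (4 * lam * ‖p - x 0‖))
      rw [mul_zero, add_zero] at h5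
      exact h5
    refine squeeze_zero (fun n => sq_nonneg _) (fun n => ?_) hBt
    · have h1 := (step2 n).2
      have h2 := hchain n
      have h3 : 2 * lam * (‖A (kn n) (z n (ln n)) - A (kn n) p‖ * ‖uu n (kn n) - p‖)
          ≤ (4 * lam * ‖p - x 0‖) * ‖A (kn n) (z n (ln n)) - A (kn n) p‖ := by
        have hnn : 0 ≤ 2 * lam * ‖A (kn n) (z n (ln n)) - A (kn n) p‖ :=
          mul_nonneg (by linarith [hlam.1]) (norm_nonneg _)
        have h6 := mul_le_mul_of_nonneg_left (hPU n) hnn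
        nlinarith [h6]
      linarith
  have hzu : Filter.Tendsto (fun n => ‖z n (ln n) - uu n (kn n)‖) Filter.atTop (nhds 0) :=
    tendsto_zero_of_sq (fun n => norm_nonneg _) hzu2
  refine ⟨hzu, ?_⟩
  refine squeeze_zero (fun n => norm_nonneg _) (fun n => ?_) (by simpa using hxz.add hzu)
  have := dist_triangle (x n) (z n (ln n)) (uu n (kn n))
  simpa [dist_eq_norm] using this
end
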